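/- arXiv:0903.1066 — 11 statements merged into one kernel-verified Lean document; each statement's English description precedes it below -/
import Mathlib

section
/- Let A be a normed algebra, B a Banach algebra, f: A → B a map, and φ₂: A × A → ℝ≥0 a function satisfying ‖f(2x+y) + f(2x−y) − 2f(x+y) − 2f(x−y) − 12f(x)‖ ≤ φ₂(x,y) for all x,y ∈ A. Then for every x ∈ A and every natural number n, ‖f(2ⁿx)/2^{3n} − f(x)‖ ≤ (1/16) · Σ_{i=0}^{n−1} φ₂(2ⁱx, 0)/2^{3i}. -/
theorem cubic_iteration_bound
    {A B : Type*} [NormedRing A] [NormedAlgebra ℝ A]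
    [NormedRing B] [NormedAlgebra ℝ B] [CompleteSpace B]
    (f : A → B) (φ₂ : A → A → ℝ) (hφ₂ : ∀ x y, 0 ≤ φ₂ x y)
    (h : ∀ x y : A, ‖f ((2:ℝ) • x + y) + f ((2:ℝ) • x - y)
        - (2:ℝ) • f (x + y) - (2:ℝ) • f (x - y) - (12:ℝ) • f x‖ ≤ φ₂ x y) :
    ∀ (x : A) (n : ℕ),
      ‖(1 / (2:ℝ) ^ (3 * n)) • f ((2:ℝ) ^ n • x) - f x‖
        ≤ (1 / 16) * ∑ i ∈ Finset.range n, φ₂ ((2:ℝ) ^ i • x) 0 / 2 ^ (3 * i) := by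
  have key : ∀ x : A, ‖(1/8 : ℝ) • f ((2:ℝ) • x) - f x‖ ≤ φ₂ x 0 / 16 := by
    intro x
    have h0 := h x 0
    simp only [add_zero, sub_zero] at h0
    have e : f ((2:ℝ) • x) + f ((2:ℝ) • x) - (2:ℝ) • f x - (2:ℝ) • f x - (12:ℝ) • f x
        = (16:ℝ) • ((1/8 : ℝ) • f ((2:ℝ) • x) - f x) := by
      rw [smul_sub, smul_smul]
      norm_num
      module
    rw [e, norm_smul] at h0
    simp only [Real.norm_ofNat] at h0
    linarith
  intro x n
  induction n with
  | zero => simp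
  | succ n ih =>
    have step : ‖(1 / (2:ℝ) ^ (3 * (n+1))) • f ((2:ℝ) ^ (n+1) • x)
        - (1 / (2:ℝ) ^ (3 * n)) • f ((2:ℝ) ^ n • x)‖
        ≤ (1/16) * (φ₂ ((2:ℝ) ^ n • x) 0 / 2 ^ (3 * n)) := by
      have hk := key ((2:ℝ) ^ n • x)
      have e2 : (2:ℝ) ^ (n+1) • x = (2:ℝ) • ((2:ℝ) ^ n • x) := by
        rw [smul_smul, pow_succ, mul_comm]
      rw [e2]
      have e3 : (1 / (2:ℝ) ^ (3 * (n+1))) • f ((2:ℝ) • ((2:ℝ) ^ n • x))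
          - (1 / (2:ℝ) ^ (3 * n)) • f ((2:ℝ) ^ n • x)
          = (1 / (2:ℝ) ^ (3 * n)) • ((1/8 : ℝ) • f ((2:ℝ) • ((2:ℝ) ^ n • x))
              - f ((2:ℝ) ^ n • x)) := by
        have hs : (1 / (2:ℝ) ^ (3 * (n+1))) = (1 / (2:ℝ) ^ (3*n)) * (1/8) := by
          rw [mul_add, pow_add]; norm_num; ring
        rw [hs, smul_sub, mul_smul]
      rw [e3, norm_smul]
      have hp : (0:ℝ) < (2:ℝ) ^ (3 * n) := by positivity
      rw [Real.norm_eq_abs, abs_of_pos (by positivity)]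
      calc (1 / (2:ℝ) ^ (3 * n)) * ‖(1/8 : ℝ) • f ((2:ℝ) • ((2:ℝ) ^ n • x)) - f ((2:ℝ) ^ n • x)‖
          ≤ (1 / (2:ℝ) ^ (3 * n)) * (φ₂ ((2:ℝ) ^ n • x) 0 / 16) := by
            apply mul_le_mul_of_nonneg_left hk (by positivity)
        _ = (1/16) * (φ₂ ((2:ℝ) ^ n • x) 0 / 2 ^ (3 * n)) := by ring
    rw [Finset.sum_range_succ]
    calc ‖(1 / (2:ℝ) ^ (3 * (n+1))) • f ((2:ℝ) ^ (n+1) • x) - f x‖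
        ≤ ‖(1 / (2:ℝ) ^ (3 * (n+1))) • f ((2:ℝ) ^ (n+1) • x)
            - (1 / (2:ℝ) ^ (3 * n)) • f ((2:ℝ) ^ n • x)‖
          + ‖(1 / (2:ℝ) ^ (3 * n)) • f ((2:ℝ) ^ n • x) - f x‖ := by
            exact norm_sub_le_norm_sub_add_norm_sub _ _ _
      _ ≤ (1/16) * (φ₂ ((2:ℝ) ^ n • x) 0 / 2 ^ (3 * n))
          + (1/16) * ∑ i ∈ Finset.range n, φ₂ ((2:ℝ) ^ i • x) 0 / 2 ^ (3 * i) :=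
            add_le_add step ih
      _ = (1/16) * (∑ i ∈ Finset.range n, φ₂ ((2:ℝ) ^ i • x) 0 / 2 ^ (3 * i)
          + φ₂ ((2:ℝ) ^ n • x) 0 / 2 ^ (3 * n)) := by ring
end

section
/- Let A be a normed algebra, B a Banach algebra, and f: A → B satisfy ‖f(2x+y) + f(2x−y) − 2f(x+y) − 2f(x−y) − 12f(x)‖ ≤ φ₂(x,y) for all x, y ∈ A, where the series Ψ(x) = Σ_{i=0}^∞ φ₂(2ⁱx, 0)/2^{3i} converges for every x. Then the sequence n ↦ f(2ⁿx)/2^{3n} is a Cauchy sequence in B for every x ∈ A, and hence converges. -/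
theorem cubic_cauchy_sequence
    {A B : Type*} [NormedRing A] [NormedAlgebra ℝ A]
    [NormedRing B] [NormedAlgebra ℝ B] [CompleteSpace B]
    (f : A → B) (φ₂ : A → A → ℝ) (hφ₂ : ∀ x y, 0 ≤ φ₂ x y)
    (h : ∀ x y : A, ‖f ((2:ℝ) • x + y) + f ((2:ℝ) • x - y)
        - (2:ℝ) • f (x + y) - (2:ℝ) • f (x - y) - (12:ℝ) • f x‖ ≤ φ₂ x y)
    (hΨ : ∀ x : A, Summable (fun i : ℕ => φ₂ ((2:ℝ) ^ i • x) 0 / 2 ^ (3 * i))) :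
    ∀ x : A, CauchySeq (fun n : ℕ => (1 / (2:ℝ) ^ (3 * n)) • f ((2:ℝ) ^ n • x)) := by
  intro x
  apply cauchySeq_of_summable_dist
  have key : ∀ n : ℕ,
      dist ((1 / (2:ℝ) ^ (3 * n)) • f ((2:ℝ) ^ n • x))
        ((1 / (2:ℝ) ^ (3 * (n + 1))) • f ((2:ℝ) ^ (n + 1) • x))
      ≤ (1 / 16) * (φ₂ ((2:ℝ) ^ n • x) 0 / 2 ^ (3 * n)) := by
    intro n
    set u : A := (2:ℝ) ^ n • x with hu_def
    have hu : (2:ℝ) ^ (n + 1) • x = (2:ℝ) • u := by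
      rw [hu_def, pow_succ', mul_smul]
    have h' : ‖(2:ℝ) • f ((2:ℝ) • u) - (16:ℝ) • f u‖ ≤ φ₂ u 0 := by
      have := h u 0
      simp only [add_zero, sub_zero] at this
      have heq : (2:ℝ) • f ((2:ℝ) • u) - (16:ℝ) • f u
          = f ((2:ℝ) • u) + f ((2:ℝ) • u) - (2:ℝ) • f u - (2:ℝ) • f u
            - (12:ℝ) • f u := by module
      rw [heq]; exact this
    rw [dist_eq_norm]
    have hsplit : (1 / (2:ℝ) ^ (3 * n)) • f u
        - (1 / (2:ℝ) ^ (3 * (n + 1))) • f ((2:ℝ) ^ (n + 1) • x)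
        = (1 / (2:ℝ) ^ (3 * n + 4)) • ((16:ℝ) • f u - (2:ℝ) • f ((2:ℝ) • u)) := by
      rw [hu]
      have e1 : (1 / (2:ℝ) ^ (3 * n)) = (1 / (2:ℝ) ^ (3 * n + 4)) * 16 := by
        rw [pow_add]; norm_num; ring
      have e2 : (1 / (2:ℝ) ^ (3 * (n + 1))) = (1 / (2:ℝ) ^ (3 * n + 4)) * 2 := by
        have h3 : 3 * (n + 1) = 3 * n + 3 := by ring
        rw [h3, pow_add, pow_add]; norm_num; ring
      rw [e1, e2, mul_smul, mul_smul, ← smul_sub]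
    rw [hsplit, norm_smul, norm_sub_rev]
    have hnn : ‖(1 / (2:ℝ) ^ (3 * n + 4))‖ = 1 / (2:ℝ) ^ (3 * n + 4) := by
      rw [Real.norm_eq_abs, abs_of_pos]; positivity
    rw [hnn]
    calc (1 / (2:ℝ) ^ (3 * n + 4)) * ‖(2:ℝ) • f ((2:ℝ) • u) - (16:ℝ) • f u‖
        ≤ (1 / (2:ℝ) ^ (3 * n + 4)) * φ₂ u 0 := by
          exact mul_le_mul_of_nonneg_left h' (by positivity)
      _ = (1 / 16) * (φ₂ u 0 / 2 ^ (3 * n)) := by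
          rw [pow_add]; rw [show ((2:ℝ)^4 : ℝ) = 16 by norm_num]; ring
  exact Summable.of_nonneg_of_le (fun n => dist_nonneg) key ((hΨ x).mul_left _)
end

section
/- Let A be a Banach algebra, f: A → A, and φ₁, φ₂: A × A → ℝ≥0 such that ‖f(xy) − f(x)f(y)‖ ≤ φ₁(x,y) and ‖f(2x+y) + f(2x−y) − 2f(x+y) − 2f(x−y) − 12f(x)‖ ≤ φ₂(x,y) for all x, y ∈ A. Assume Ψ(x,y) = Σ_{i=0}^∞ φ₂(2ⁱx, 2ⁱy)/2^{3i} converges for all x,y and lim_{n→∞} φ₁(2ⁿx, 2ⁿy)/2^{6n} = 0 for all x,y. Then there exists a unique map T: A → A satisfying T(xy) = T(x)T(y), T(2x+y) + T(2x−y) = 2T(x+y) + 2T(x−y) + 12T(x) for all x,y ∈ A, and ‖T(x) − f(x)‖ ≤ (1/16)Ψ(x, 0) for all x ∈ A. -/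
/-!
Hyers' direct method. Putting `y = 0` in the cubic defect gives
`‖f (2x) / 8 - f x‖ ≤ φ₂ (x, 0) / 16`, so `f (2ⁿ x) / 2³ⁿ` is Cauchy with increments dominated by
the series `Ψ (x, 0) / 16`; its limit `T` lies within `Ψ (x, 0) / 16` of `f`. The cubic and
multiplicative defects of the approximants are those of `f` at `(2ⁿ x, 2ⁿ y)` scaled by `2⁻³ⁿ` and
`2⁻⁶ⁿ`, so they vanish in the limit. A cubic map satisfies `T (2ⁿ x) = 2³ⁿ T x`, hence two
solutions within `Ψ / 16` of `f` differ at `x` by at most twice a tail of the series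
`Ψ (x, 0) / 16`.
-/

open Filter Topology

section Cubic

variable {E F : Type*} [AddCommGroup E] [Module ℝ E] [AddCommGroup F] [Module ℝ F]

def cubicDefect (f : E → F) (x y : E) : F :=
  f ((2:ℝ) • x + y) + f ((2:ℝ) • x - y) - (2:ℝ) • f (x + y) - (2:ℝ) • f (x - y) - (12:ℝ) • f x

theorem cubicDefect_eq_zero_iff {f : E → F} {x y : E} :
    cubicDefect f x y = 0 ↔
      f ((2:ℝ) • x + y) + f ((2:ℝ) • x - y)
        = (2:ℝ) • f (x + y) + (2:ℝ) • f (x - y) + (12:ℝ) • f x := by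
  rw [cubicDefect, sub_sub, sub_sub, sub_eq_zero, add_assoc]

theorem cubicDefect_zero_right (f : E → F) (x : E) :
    cubicDefect f x 0 = (16:ℝ) • ((8:ℝ)⁻¹ • f ((2:ℝ) • x) - f x) := by
  simp only [cubicDefect, add_zero, sub_zero]
  module

theorem cubicDefect_rescale (f : E → F) (c a : ℝ) (x y : E) :
    cubicDefect (fun z => c • f (a • z)) x y = c • cubicDefect f (a • x) (a • y) := by
  simp only [cubicDefect, smul_add, smul_sub, smul_comm a (2:ℝ)]
  module

theorem map_two_pow_smul_of_cubicDefect_eq_zero {S : E → F} (hS : ∀ x y, cubicDefect S x y = 0)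
    (n : ℕ) (x : E) : S ((2:ℝ) ^ n • x) = (2:ℝ) ^ (3 * n) • S x := by
  have hdouble : ∀ z, S ((2:ℝ) • z) = (8:ℝ) • S z := fun z => by
    have h := hS z 0
    rw [cubicDefect_zero_right, smul_eq_zero_iff_right (by norm_num), sub_eq_zero] at h
    rw [← h, smul_smul]
    norm_num
  induction n generalizing x with
  | zero => simp
  | succ n ih =>
    rw [pow_succ, mul_smul, ih, hdouble, smul_smul]
    ring_nf

noncomputable def cubicApprox (f : E → F) (x : E) (n : ℕ) : F :=
  ((2:ℝ) ^ (3 * n))⁻¹ • f ((2:ℝ) ^ n • x)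

theorem cubicDefect_cubicApprox (f : E → F) (n : ℕ) (x y : E) :
    cubicDefect (cubicApprox f · n) x y
      = ((2:ℝ) ^ (3 * n))⁻¹ • cubicDefect f ((2:ℝ) ^ n • x) ((2:ℝ) ^ n • y) :=
  cubicDefect_rescale f _ _ x y

theorem tendsto_cubicDefect [TopologicalSpace F] [IsTopologicalAddGroup F]
    [ContinuousConstSMul ℝ F] {ι : Type*} {l : Filter ι} {g : ι → E → F} {T : E → F}
    (hg : ∀ x, Tendsto (fun i => g i x) l (𝓝 (T x))) (x y : E) :
    Tendsto (fun i => cubicDefect (g i) x y) l (𝓝 (cubicDefect T x y)) :=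
  ((((hg _).add (hg _)).sub ((hg _).const_smul _)).sub ((hg _).const_smul _)).sub
    ((hg _).const_smul _)

end Cubic

section Normed

variable {E F : Type*} [AddCommGroup E] [Module ℝ E] [NormedAddCommGroup F] [NormedSpace ℝ F]

noncomputable def cubicLimit (f : E → F) (x : E) : F := limUnder atTop (cubicApprox f x)

theorem norm_inv_smul_le_div {c r : ℝ} (hc : 0 < c) {v : F} (hv : ‖v‖ ≤ r) : ‖c⁻¹ • v‖ ≤ r / c := by
  rw [norm_smul_of_nonneg (inv_nonneg.2 hc.le), inv_mul_eq_div]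
  gcongr

theorem dist_cubicApprox_succ_le {f : E → F} {φ : E → ℝ} (hf : ∀ x, ‖cubicDefect f x 0‖ ≤ φ x)
    (x : E) (n : ℕ) :
    dist (cubicApprox f x n) (cubicApprox f x (n + 1))
      ≤ 1 / 16 * (φ ((2:ℝ) ^ n • x) / 2 ^ (3 * n)) := by
  have hdiff : cubicApprox f x (n + 1) - cubicApprox f x n
      = (16 * (2:ℝ) ^ (3 * n))⁻¹ • cubicDefect f ((2:ℝ) ^ n • x) 0 := by
    rw [cubicDefect_zero_right, cubicApprox, cubicApprox, smul_smul (2:ℝ), ← pow_succ']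
    module
  rw [dist_comm, dist_eq_norm, hdiff]
  exact (norm_inv_smul_le_div (by positivity) (hf _)).trans_eq (by ring)

@[simp]
theorem cubicApprox_zero (f : E → F) (x : E) : cubicApprox f x 0 = f x := by
  simp [cubicApprox]

theorem tendsto_cubicApprox [CompleteSpace F] {f : E → F} {φ : E → ℝ}
    (hf : ∀ x, ‖cubicDefect f x 0‖ ≤ φ x) {x : E}
    (hs : Summable fun n => φ ((2:ℝ) ^ n • x) / 2 ^ (3 * n)) :
    Tendsto (cubicApprox f x) atTop (𝓝 (cubicLimit f x)) :=
  (cauchySeq_of_dist_le_of_summable _ (dist_cubicApprox_succ_le hf x)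
    (hs.mul_left _)).tendsto_limUnder

theorem norm_cubicLimit_sub_le [CompleteSpace F] {f : E → F} {φ : E → ℝ}
    (hf : ∀ x, ‖cubicDefect f x 0‖ ≤ φ x) {x : E}
    (hs : Summable fun n => φ ((2:ℝ) ^ n • x) / 2 ^ (3 * n)) :
    ‖cubicLimit f x - f x‖ ≤ 1 / 16 * ∑' n, φ ((2:ℝ) ^ n • x) / 2 ^ (3 * n) := by
  have h := dist_le_tsum_of_dist_le_of_tendsto₀ _ (dist_cubicApprox_succ_le hf x) (hs.mul_left _)
    (tendsto_cubicApprox hf hs)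
  rwa [tsum_mul_left, cubicApprox_zero, dist_comm, dist_eq_norm] at h

theorem cubicDefect_eq_zero_of_tendsto {f T : E → F} {φ : E → E → ℝ}
    (hT : ∀ x, Tendsto (cubicApprox f x) atTop (𝓝 (T x)))
    (hf : ∀ x y, ‖cubicDefect f x y‖ ≤ φ x y) {x y : E}
    (hφ : Tendsto (fun n => φ ((2:ℝ) ^ n • x) ((2:ℝ) ^ n • y) / 2 ^ (3 * n)) atTop (𝓝 0)) :
    cubicDefect T x y = 0 := by
  refine tendsto_nhds_unique (tendsto_cubicDefect hT x y) (squeeze_zero_norm (fun n => ?_) hφ)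
  rw [cubicDefect_cubicApprox]
  exact norm_inv_smul_le_div (by positivity) (hf _ _)

theorem tendsto_tsum_two_pow_smul_div (φ : E → ℝ) (C : ℝ) (x : E) :
    Tendsto (fun n => (C * ∑' i, φ ((2:ℝ) ^ i • (2:ℝ) ^ n • x) / 2 ^ (3 * i)) / 2 ^ (3 * n))
      atTop (𝓝 0) := by
  have htail : ∀ n, (C * ∑' i, φ ((2:ℝ) ^ i • (2:ℝ) ^ n • x) / 2 ^ (3 * i)) / 2 ^ (3 * n)
      = C * ∑' i, φ ((2:ℝ) ^ (i + n) • x) / 2 ^ (3 * (i + n)) := fun n => by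
    rw [mul_div_assoc, ← tsum_div_const]
    congr 1
    refine tsum_congr fun i => ?_
    rw [smul_smul, ← pow_add, mul_add, pow_add (2:ℝ) (3 * i), div_div]
  simpa only [htail, mul_zero] using
    (tendsto_sum_nat_add fun i => φ ((2:ℝ) ^ i • x) / 2 ^ (3 * i)).const_mul C

theorem eq_of_cubicDefect_eq_zero_of_norm_sub_le {f S T : E → F} {ψ : E → ℝ}
    (hS : ∀ x y, cubicDefect S x y = 0) (hT : ∀ x y, cubicDefect T x y = 0)
    (hSf : ∀ x, ‖S x - f x‖ ≤ ψ x) (hTf : ∀ x, ‖T x - f x‖ ≤ ψ x)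
    (hψ : ∀ x, Tendsto (fun n => ψ ((2:ℝ) ^ n • x) / 2 ^ (3 * n)) atTop (𝓝 0)) : S = T := by
  funext x
  have hbound : ∀ n : ℕ, ‖S x - T x‖ ≤ 2 * (ψ ((2:ℝ) ^ n • x) / 2 ^ (3 * n)) := fun n => by
    have hrescale : S x - T x = ((2:ℝ) ^ (3 * n))⁻¹ • (S ((2:ℝ) ^ n • x) - T ((2:ℝ) ^ n • x)) := by
      rw [map_two_pow_smul_of_cubicDefect_eq_zero hS, map_two_pow_smul_of_cubicDefect_eq_zero hT,
        ← smul_sub, inv_smul_smul₀ (by positivity)]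
    rw [hrescale, ← mul_div_assoc, two_mul]
    refine norm_inv_smul_le_div (by positivity) ?_
    exact (norm_sub_le_norm_sub_add_norm_sub _ (f ((2:ℝ) ^ n • x)) _).trans
      (add_le_add (hSf _) ((norm_sub_rev _ _).trans_le (hTf _)))
  have hlim := (hψ x).const_mul 2
  rw [mul_zero] at hlim
  exact sub_eq_zero.1 (norm_le_zero_iff.1 (ge_of_tendsto' hlim hbound))

end Normed

section Multiplicative

variable {A : Type*} [NormedRing A] [NormedAlgebra ℝ A]

theorem cubicApprox_mul_sub (f : A → A) (x y : A) (n : ℕ) :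
    cubicApprox f (x * y) (2 * n) - cubicApprox f x n * cubicApprox f y n
      = ((2:ℝ) ^ (6 * n))⁻¹ • (f (((2:ℝ) ^ n • x) * ((2:ℝ) ^ n • y))
          - f ((2:ℝ) ^ n • x) * f ((2:ℝ) ^ n • y)) := by
  rw [cubicApprox, cubicApprox, cubicApprox, smul_mul_smul_comm, smul_mul_smul_comm, ← pow_add,
    ← two_mul, ← mul_inv, ← pow_add, smul_sub]
  ring_nf

theorem map_mul_of_tendsto_cubicApprox {f T : A → A} {φ : A → A → ℝ}
    (hT : ∀ x, Tendsto (cubicApprox f x) atTop (𝓝 (T x)))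
    (hf : ∀ x y, ‖f (x * y) - f x * f y‖ ≤ φ x y) {x y : A}
    (hφ : Tendsto (fun n => φ ((2:ℝ) ^ n • x) ((2:ℝ) ^ n • y) / 2 ^ (6 * n)) atTop (𝓝 0)) :
    T (x * y) = T x * T y := by
  have hconv := ((hT (x * y)).comp (strictMono_mul_left_of_pos two_pos).tendsto_atTop).sub
    ((hT x).mul (hT y))
  refine sub_eq_zero.1 (tendsto_nhds_unique hconv (squeeze_zero_norm (fun n => ?_) hφ))
  rw [Function.comp_apply, cubicApprox_mul_sub]
  exact norm_inv_smul_le_div (by positivity) (hf _ _)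

end Multiplicative

theorem cubic_homomorphism_stability_general
    {A : Type*} [NormedRing A] [NormedAlgebra ℝ A] [CompleteSpace A]
    (f : A → A) (φ₁ φ₂ : A → A → ℝ)
    (h1 : ∀ x y : A, ‖f (x * y) - f x * f y‖ ≤ φ₁ x y)
    (h2 : ∀ x y : A, ‖f ((2:ℝ) • x + y) + f ((2:ℝ) • x - y)
        - (2:ℝ) • f (x + y) - (2:ℝ) • f (x - y) - (12:ℝ) • f x‖ ≤ φ₂ x y)
    (hΨ : ∀ x y : A,
      Summable (fun i : ℕ => φ₂ ((2:ℝ) ^ i • x) ((2:ℝ) ^ i • y) / 2 ^ (3 * i)))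
    (hlim : ∀ x y : A, Filter.Tendsto
      (fun n : ℕ => φ₁ ((2:ℝ) ^ n • x) ((2:ℝ) ^ n • y) / 2 ^ (6 * n))
      Filter.atTop (nhds 0)) :
    ∃! T : A → A,
      (∀ x y : A, T (x * y) = T x * T y) ∧
      (∀ x y : A, T ((2:ℝ) • x + y) + T ((2:ℝ) • x - y)
        = (2:ℝ) • T (x + y) + (2:ℝ) • T (x - y) + (12:ℝ) • T x) ∧
      (∀ x : A, ‖T x - f x‖ ≤ (1 / 16) * ∑' i : ℕ, φ₂ ((2:ℝ) ^ i • x) 0 / 2 ^ (3 * i)) := by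
  have hdefect : ∀ x y, ‖cubicDefect f x y‖ ≤ φ₂ x y := h2
  have hΨ₀ : ∀ x, Summable fun n => φ₂ ((2:ℝ) ^ n • x) 0 / 2 ^ (3 * n) := fun x => by
    simpa only [smul_zero] using hΨ x 0
  have hconv : ∀ x, Tendsto (cubicApprox f x) atTop (𝓝 (cubicLimit f x)) :=
    fun x => tendsto_cubicApprox (fun x => hdefect x 0) (hΨ₀ x)
  have hbound : ∀ x, ‖cubicLimit f x - f x‖ ≤ 1 / 16 * ∑' n, φ₂ ((2:ℝ) ^ n • x) 0 / 2 ^ (3 * n) :=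
    fun x => norm_cubicLimit_sub_le (fun x => hdefect x 0) (hΨ₀ x)
  have hcubic : ∀ x y, cubicDefect (cubicLimit f) x y = 0 :=
    fun x y => cubicDefect_eq_zero_of_tendsto hconv hdefect (hΨ x y).tendsto_atTop_zero
  refine ⟨cubicLimit f, ⟨fun x y => map_mul_of_tendsto_cubicApprox hconv h1 (hlim x y),
    fun x y => cubicDefect_eq_zero_iff.1 (hcubic x y), hbound⟩, ?_⟩
  rintro T ⟨-, hT_cubic, hT_bound⟩
  exact eq_of_cubicDefect_eq_zero_of_norm_sub_le
    (fun x y => cubicDefect_eq_zero_iff.2 (hT_cubic x y)) hcubic hT_bound hbound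
    (tendsto_tsum_two_pow_smul_div (fun z => φ₂ z 0) (1 / 16))

theorem cubic_homomorphism_stability
    {A : Type*} [NormedRing A] [NormedAlgebra ℝ A] [CompleteSpace A]
    (f : A → A) (φ₁ φ₂ : A → A → ℝ)
    (hφ₁ : ∀ x y, 0 ≤ φ₁ x y) (hφ₂ : ∀ x y, 0 ≤ φ₂ x y)
    (h1 : ∀ x y : A, ‖f (x * y) - f x * f y‖ ≤ φ₁ x y)
    (h2 : ∀ x y : A, ‖f ((2:ℝ) • x + y) + f ((2:ℝ) • x - y)
        - (2:ℝ) • f (x + y) - (2:ℝ) • f (x - y) - (12:ℝ) • f x‖ ≤ φ₂ x y)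
    (hΨ : ∀ x y : A,
      Summable (fun i : ℕ => φ₂ ((2:ℝ) ^ i • x) ((2:ℝ) ^ i • y) / 2 ^ (3 * i)))
    (hlim : ∀ x y : A, Filter.Tendsto
      (fun n : ℕ => φ₁ ((2:ℝ) ^ n • x) ((2:ℝ) ^ n • y) / 2 ^ (6 * n))
      Filter.atTop (nhds 0)) :
    ∃! T : A → A,
      (∀ x y : A, T (x * y) = T x * T y) ∧
      (∀ x y : A, T ((2:ℝ) • x + y) + T ((2:ℝ) • x - y)
        = (2:ℝ) • T (x + y) + (2:ℝ) • T (x - y) + (12:ℝ) • T x) ∧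
      (∀ x : A, ‖T x - f x‖ ≤ (1 / 16) * ∑' i : ℕ, φ₂ ((2:ℝ) ^ i • x) 0 / 2 ^ (3 * i)) :=
  cubic_homomorphism_stability_general f φ₁ φ₂ h1 h2 hΨ hlim
end

section
/- Let A be a Banach algebra, θ₁, θ₂ ≥ 0, and p < 3 a real number. Suppose f: A → A satisfies ‖f(xy) − f(x)f(y)‖ ≤ θ₁ and ‖f(2x+y) + f(2x−y) − 2f(x+y) − 2f(x−y) − 12f(x)‖ ≤ θ₂(‖x‖^p + ‖y‖^p) for all x, y ∈ A (with the convention 0^p = 0 for p ≤ 0). Then there exists a unique cubic homomorphism T: A → A such that ‖T(x) − f(x)‖ ≤ (1/16) · θ₂‖x‖^p / (1 − 2^{p−3}) for all x ∈ A. -/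
/-- `pp x p` is `x ^ p` with the convention `0 ^ p = 0` for all `p` (in particular `p ≤ 0`). -/
noncomputable def pp (x p : ℝ) : ℝ := if x = 0 then 0 else x ^ p

lemma pp_zero (p : ℝ) : pp 0 p = 0 := by simp [pp]

lemma pp_nonneg {x : ℝ} (hx : 0 ≤ x) (p : ℝ) : 0 ≤ pp x p := by
  unfold pp
  split
  · exact le_refl 0
  · exact Real.rpow_nonneg hx p

lemma pp_two_mul {a : ℝ} (ha : 0 ≤ a) (p : ℝ) : pp (2 * a) p = (2:ℝ) ^ p * pp a p := by
  unfold pp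
  rcases eq_or_ne a 0 with h | h
  · simp [h]
  · rw [if_neg h, if_neg (mul_ne_zero two_ne_zero h)]
    exact Real.mul_rpow (by norm_num) ha

lemma pp_pow_mul {a : ℝ} (ha : 0 ≤ a) (p : ℝ) (n : ℕ) :
    pp ((2:ℝ) ^ n * a) p = ((2:ℝ) ^ p) ^ n * pp a p := by
  induction n with
  | zero => simp
  | succ n ih =>
    have : (2:ℝ) ^ (n+1) * a = 2 * ((2:ℝ) ^ n * a) := by ring
    rw [this, pp_two_mul (by positivity) p, ih, pow_succ]
    ring

theorem cubic_homomorphism_stability_powers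
    {A : Type*} [NormedRing A] [NormedAlgebra ℝ A] [CompleteSpace A]
    (f : A → A) (θ₁ θ₂ p : ℝ) (hθ₁ : 0 ≤ θ₁) (hθ₂ : 0 ≤ θ₂) (hp : p < 3)
    (h1 : ∀ x y : A, ‖f (x * y) - f x * f y‖ ≤ θ₁)
    (h2 : ∀ x y : A, ‖f ((2:ℝ) • x + y) + f ((2:ℝ) • x - y)
        - (2:ℝ) • f (x + y) - (2:ℝ) • f (x - y) - (12:ℝ) • f x‖
        ≤ θ₂ * (pp ‖x‖ p + pp ‖y‖ p)) :
    ∃! T : A → A,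
      (∀ x y : A, T (x * y) = T x * T y) ∧
      (∀ x y : A, T ((2:ℝ) • x + y) + T ((2:ℝ) • x - y)
        = (2:ℝ) • T (x + y) + (2:ℝ) • T (x - y) + (12:ℝ) • T x) ∧
      (∀ x : A, ‖T x - f x‖ ≤ (1 / 16) * (θ₂ * pp ‖x‖ p / (1 - (2:ℝ) ^ (p - 3)))) := by
  set r : ℝ := (2:ℝ) ^ (p - 3) with hr_def
  have hr_pos : 0 < r := Real.rpow_pos_of_pos two_pos _
  have hr_lt : r < 1 := Real.rpow_lt_one_of_one_lt_of_neg one_lt_two (by linarith)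
  have h23 : (2:ℝ) ^ (3:ℝ) = 8 := by
    rw [show (3:ℝ) = ((3:ℕ):ℝ) by norm_num, Real.rpow_natCast]; norm_num
  have hr8 : r = (2:ℝ) ^ p / 8 := by
    rw [hr_def, Real.rpow_sub two_pos, h23]
  -- norm of doubled points
  have hnorm : ∀ (n : ℕ) (x : A), ‖(2:ℝ) ^ n • x‖ = (2:ℝ) ^ n * ‖x‖ := by
    intro n x
    rw [norm_smul, Real.norm_eq_abs, abs_of_pos (by positivity)]
  have ppkey : ∀ (n : ℕ) (x : A), pp ‖(2:ℝ) ^ n • x‖ p = ((2:ℝ) ^ p) ^ n * pp ‖x‖ p := by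
    intro n x
    rw [hnorm, pp_pow_mul (norm_nonneg x) p n]
  -- the approximating sequence
  set g : ℕ → A → A := fun n x => ((8:ℝ) ^ n)⁻¹ • f ((2:ℝ) ^ n • x) with hg_def
  have hg0 : ∀ x : A, g 0 x = f x := by intro x; simp [hg_def]
  -- one-step estimate
  have h3 : ∀ z : A, ‖(8:ℝ)⁻¹ • f ((2:ℝ) • z) - f z‖ ≤ θ₂ / 16 * pp ‖z‖ p := by
    intro z
    have h := h2 z 0
    simp only [add_zero, sub_zero, norm_zero, pp_zero] at h
    have key : (8:ℝ)⁻¹ • f ((2:ℝ) • z) - f z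
        = (16:ℝ)⁻¹ • (f ((2:ℝ) • z) + f ((2:ℝ) • z)
            - (2:ℝ) • f z - (2:ℝ) • f z - (12:ℝ) • f z) := by
      module
    rw [key, norm_smul, Real.norm_eq_abs, abs_of_pos (by norm_num : (0:ℝ) < 16⁻¹)]
    calc (16:ℝ)⁻¹ * ‖f ((2:ℝ) • z) + f ((2:ℝ) • z)
            - (2:ℝ) • f z - (2:ℝ) • f z - (12:ℝ) • f z‖
        ≤ (16:ℝ)⁻¹ * (θ₂ * pp ‖z‖ p) :=
          mul_le_mul_of_nonneg_left h (by norm_num)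
      _ = θ₂ / 16 * pp ‖z‖ p := by ring
  -- geometric step estimate
  have hstep : ∀ (x : A) (n : ℕ),
      dist (g n x) (g (n+1) x) ≤ (θ₂ / 16 * pp ‖x‖ p) * r ^ n := by
    intro x n
    rw [dist_eq_norm']
    have key : g (n+1) x - g n x
        = ((8:ℝ) ^ n)⁻¹ • ((8:ℝ)⁻¹ • f ((2:ℝ) • ((2:ℝ) ^ n • x)) - f ((2:ℝ) ^ n • x)) := by
      simp only [hg_def]
      rw [show (2:ℝ) ^ (n+1) • x = (2:ℝ) • ((2:ℝ) ^ n • x) by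
            rw [smul_smul, ← pow_succ'],
          pow_succ (8:ℝ) n, mul_inv]
      module
    rw [key, norm_smul, Real.norm_eq_abs, abs_of_pos (by positivity : (0:ℝ) < ((8:ℝ) ^ n)⁻¹)]
    calc ((8:ℝ) ^ n)⁻¹ * ‖(8:ℝ)⁻¹ • f ((2:ℝ) • ((2:ℝ) ^ n • x)) - f ((2:ℝ) ^ n • x)‖
        ≤ ((8:ℝ) ^ n)⁻¹ * (θ₂ / 16 * pp ‖(2:ℝ) ^ n • x‖ p) :=
          mul_le_mul_of_nonneg_left (h3 _) (by positivity)
      _ = (θ₂ / 16 * pp ‖x‖ p) * r ^ n := by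
          rw [ppkey n x, hr8, div_pow]; ring
  -- existence of the limit
  have hTex : ∀ x : A, ∃ L : A, Filter.Tendsto (fun n => g n x) Filter.atTop (nhds L) :=
    fun x => cauchySeq_tendsto_of_complete (cauchySeq_of_le_geometric r _ hr_lt (hstep x))
  choose T hT using hTex
  -- distance bound
  have hbound : ∀ x : A, ‖T x - f x‖ ≤ (1 / 16) * (θ₂ * pp ‖x‖ p / (1 - r)) := by
    intro x
    have h := dist_le_of_le_geometric_of_tendsto₀ r _ hr_lt (hstep x) (hT x)
    simp only [hg0, dist_eq_norm'] at h
    calc ‖T x - f x‖ ≤ (θ₂ / 16 * pp ‖x‖ p) / (1 - r) := h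
      _ = (1 / 16) * (θ₂ * pp ‖x‖ p / (1 - r)) := by ring
  -- cubic functional equation
  have hT_cubic : ∀ x y : A, T ((2:ℝ) • x + y) + T ((2:ℝ) • x - y)
      = (2:ℝ) • T (x + y) + (2:ℝ) • T (x - y) + (12:ℝ) • T x := by
    intro x y
    have hlim : Filter.Tendsto
        (fun n => g n ((2:ℝ) • x + y) + g n ((2:ℝ) • x - y)
          - (2:ℝ) • g n (x + y) - (2:ℝ) • g n (x - y) - (12:ℝ) • g n x)
        Filter.atTop
        (nhds (T ((2:ℝ) • x + y) + T ((2:ℝ) • x - y)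
          - (2:ℝ) • T (x + y) - (2:ℝ) • T (x - y) - (12:ℝ) • T x)) :=
      ((((hT _).add (hT _)).sub ((hT _).const_smul _)).sub
        ((hT _).const_smul _)).sub ((hT _).const_smul _)
    have hzero : Filter.Tendsto
        (fun n => g n ((2:ℝ) • x + y) + g n ((2:ℝ) • x - y)
          - (2:ℝ) • g n (x + y) - (2:ℝ) • g n (x - y) - (12:ℝ) • g n x)
        Filter.atTop (nhds 0) := by
      apply squeeze_zero_norm (a := fun n => θ₂ * (pp ‖x‖ p + pp ‖y‖ p) * r ^ n)
      · intro n
        have key : g n ((2:ℝ) • x + y) + g n ((2:ℝ) • x - y)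
            - (2:ℝ) • g n (x + y) - (2:ℝ) • g n (x - y) - (12:ℝ) • g n x
            = ((8:ℝ) ^ n)⁻¹ •
              (f ((2:ℝ) • ((2:ℝ) ^ n • x) + (2:ℝ) ^ n • y)
                + f ((2:ℝ) • ((2:ℝ) ^ n • x) - (2:ℝ) ^ n • y)
                - (2:ℝ) • f ((2:ℝ) ^ n • x + (2:ℝ) ^ n • y)
                - (2:ℝ) • f ((2:ℝ) ^ n • x - (2:ℝ) ^ n • y)
                - (12:ℝ) • f ((2:ℝ) ^ n • x)) := by
          simp only [hg_def]
          rw [show (2:ℝ) ^ n • ((2:ℝ) • x + y)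
                = (2:ℝ) • ((2:ℝ) ^ n • x) + (2:ℝ) ^ n • y by module,
              show (2:ℝ) ^ n • ((2:ℝ) • x - y)
                = (2:ℝ) • ((2:ℝ) ^ n • x) - (2:ℝ) ^ n • y by module,
              show (2:ℝ) ^ n • (x + y) = (2:ℝ) ^ n • x + (2:ℝ) ^ n • y by module,
              show (2:ℝ) ^ n • (x - y) = (2:ℝ) ^ n • x - (2:ℝ) ^ n • y by module]
          module
        rw [key, norm_smul, Real.norm_eq_abs,
          abs_of_pos (by positivity : (0:ℝ) < ((8:ℝ) ^ n)⁻¹)]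
        calc ((8:ℝ) ^ n)⁻¹ * ‖f ((2:ℝ) • ((2:ℝ) ^ n • x) + (2:ℝ) ^ n • y)
                + f ((2:ℝ) • ((2:ℝ) ^ n • x) - (2:ℝ) ^ n • y)
                - (2:ℝ) • f ((2:ℝ) ^ n • x + (2:ℝ) ^ n • y)
                - (2:ℝ) • f ((2:ℝ) ^ n • x - (2:ℝ) ^ n • y)
                - (12:ℝ) • f ((2:ℝ) ^ n • x)‖
            ≤ ((8:ℝ) ^ n)⁻¹ * (θ₂ * (pp ‖(2:ℝ) ^ n • x‖ p + pp ‖(2:ℝ) ^ n • y‖ p)) :=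
              mul_le_mul_of_nonneg_left (h2 _ _) (by positivity)
          _ = θ₂ * (pp ‖x‖ p + pp ‖y‖ p) * r ^ n := by
              rw [ppkey n x, ppkey n y, hr8, div_pow]; ring
      · simpa using
          (tendsto_pow_atTop_nhds_zero_of_lt_one hr_pos.le hr_lt).const_mul
            (θ₂ * (pp ‖x‖ p + pp ‖y‖ p))
    have h0 := tendsto_nhds_unique hlim hzero
    calc T ((2:ℝ) • x + y) + T ((2:ℝ) • x - y)
        = (T ((2:ℝ) • x + y) + T ((2:ℝ) • x - y)
            - (2:ℝ) • T (x + y) - (2:ℝ) • T (x - y) - (12:ℝ) • T x)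
          + ((2:ℝ) • T (x + y) + (2:ℝ) • T (x - y) + (12:ℝ) • T x) := by abel
      _ = (2:ℝ) • T (x + y) + (2:ℝ) • T (x - y) + (12:ℝ) • T x := by
          rw [h0, zero_add]
  -- multiplicativity
  have hT_mul : ∀ x y : A, T (x * y) = T x * T y := by
    intro x y
    have hdbl : Filter.Tendsto (fun n : ℕ => 2 * n) Filter.atTop Filter.atTop :=
      Filter.tendsto_atTop_mono (fun n => Nat.le_mul_of_pos_left n (by norm_num))
        Filter.tendsto_id
    have h2n : Filter.Tendsto (fun n => g (2*n) (x*y)) Filter.atTop (nhds (T (x*y))) :=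
      (hT (x*y)).comp hdbl
    have hmul : Filter.Tendsto (fun n => g n x * g n y) Filter.atTop (nhds (T x * T y)) :=
      (hT x).mul (hT y)
    have hdiff : Filter.Tendsto (fun n => g (2*n) (x*y) - g n x * g n y)
        Filter.atTop (nhds 0) := by
      apply squeeze_zero_norm (a := fun n => θ₁ * ((64:ℝ)⁻¹) ^ n)
      · intro n
        have e1 : (2:ℝ) ^ (2*n) • (x*y) = ((2:ℝ) ^ n • x) * ((2:ℝ) ^ n • y) := by
          rw [smul_mul_smul_comm, ← pow_add, ← two_mul]
        have e2 : (8:ℝ) ^ (2*n) = 64 ^ n := by rw [pow_mul]; norm_num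
        have e3 : (8:ℝ) ^ n * (8:ℝ) ^ n = 64 ^ n := by rw [← mul_pow]; norm_num
        have key : g (2*n) (x*y) - g n x * g n y
            = ((64:ℝ) ^ n)⁻¹ •
              (f (((2:ℝ) ^ n • x) * ((2:ℝ) ^ n • y))
                - f ((2:ℝ) ^ n • x) * f ((2:ℝ) ^ n • y)) := by
          have e4 : ((8:ℝ) ^ n)⁻¹ • f ((2:ℝ) ^ n • x) * (((8:ℝ) ^ n)⁻¹ • f ((2:ℝ) ^ n • y))
              = ((64:ℝ) ^ n)⁻¹ • (f ((2:ℝ) ^ n • x) * f ((2:ℝ) ^ n • y)) := by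
            rw [smul_mul_smul_comm, ← mul_inv, e3]
          simp only [hg_def]
          rw [e1, e2, e4, smul_sub]
        rw [key, norm_smul, Real.norm_eq_abs,
          abs_of_pos (by positivity : (0:ℝ) < ((64:ℝ) ^ n)⁻¹)]
        calc ((64:ℝ) ^ n)⁻¹ * ‖f (((2:ℝ) ^ n • x) * ((2:ℝ) ^ n • y))
                - f ((2:ℝ) ^ n • x) * f ((2:ℝ) ^ n • y)‖
            ≤ ((64:ℝ) ^ n)⁻¹ * θ₁ := mul_le_mul_of_nonneg_left (h1 _ _) (by positivity)
          _ = θ₁ * ((64:ℝ)⁻¹) ^ n := by rw [inv_pow]; ring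
      · simpa using
          (tendsto_pow_atTop_nhds_zero_of_lt_one (by norm_num : (0:ℝ) ≤ 64⁻¹)
            (by norm_num : (64:ℝ)⁻¹ < 1)).const_mul θ₁
    have h0 := tendsto_nhds_unique (h2n.sub hmul) hdiff
    exact sub_eq_zero.mp h0
  refine ⟨T, ⟨hT_mul, hT_cubic, hbound⟩, ?_⟩
  rintro T' ⟨h1', h2', h3'⟩
  funext x
  -- T' 0 = 0
  have hT'0 : T' 0 = 0 := by
    have h := h2' 0 0
    simp only [smul_zero, add_zero, sub_zero] at h
    have h14 : (14:ℝ) • T' 0 = 0 := by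
      calc (14:ℝ) • T' 0
          = ((2:ℝ) • T' 0 + (2:ℝ) • T' 0 + (12:ℝ) • T' 0) - (T' 0 + T' 0) := by module
        _ = 0 := by rw [← h]; abel
    have hn := congrArg norm h14
    rw [norm_smul, norm_zero, Real.norm_eq_abs] at hn
    have habs : |(14:ℝ)| = 14 := by norm_num
    rw [habs] at hn
    have : ‖T' 0‖ = 0 := by linarith
    exact norm_eq_zero.mp this
  -- doubling for T'
  have hdouble : ∀ z : A, T' ((2:ℝ) • z) = (8:ℝ) • T' z := by
    intro z
    have h := h2' z 0
    simp only [add_zero, sub_zero] at h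
    have h2T : (2:ℝ) • T' ((2:ℝ) • z) = (2:ℝ) • ((8:ℝ) • T' z) := by
      calc (2:ℝ) • T' ((2:ℝ) • z) = T' ((2:ℝ) • z) + T' ((2:ℝ) • z) := two_smul ℝ _
        _ = (2:ℝ) • T' z + (2:ℝ) • T' z + (12:ℝ) • T' z := h
        _ = (2:ℝ) • ((8:ℝ) • T' z) := by module
    have h' := congrArg (fun v => (2:ℝ)⁻¹ • v) h2T
    simpa [smul_smul, show (2:ℝ)⁻¹ * 2 = 1 by norm_num] using h'
  have hiter : ∀ (n : ℕ) (z : A), T' ((2:ℝ) ^ n • z) = (8:ℝ) ^ n • T' z := by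
    intro n
    induction n with
    | zero => intro z; simp
    | succ n ih =>
      intro z
      have : (2:ℝ) ^ (n+1) • z = (2:ℝ) ^ n • ((2:ℝ) • z) := by
        rw [smul_smul, ← pow_succ]
      rw [this, ih, hdouble, smul_smul, ← pow_succ]
  -- T' is also the limit of g
  have hnle : ∀ n : ℕ, ‖g n x - T' x‖
      ≤ ((1 / 16) * (θ₂ * pp ‖x‖ p / (1 - r))) * r ^ n := by
    intro n
    have key : T' x - g n x
        = ((8:ℝ) ^ n)⁻¹ • (T' ((2:ℝ) ^ n • x) - f ((2:ℝ) ^ n • x)) := by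
      rw [hiter n x]
      simp only [hg_def, smul_sub, smul_smul]
      rw [inv_mul_cancel₀ (by positivity : ((8:ℝ) ^ n) ≠ 0), one_smul]
    rw [norm_sub_rev, key, norm_smul, Real.norm_eq_abs,
      abs_of_pos (by positivity : (0:ℝ) < ((8:ℝ) ^ n)⁻¹)]
    calc ((8:ℝ) ^ n)⁻¹ * ‖T' ((2:ℝ) ^ n • x) - f ((2:ℝ) ^ n • x)‖
        ≤ ((8:ℝ) ^ n)⁻¹ * ((1 / 16) * (θ₂ * pp ‖(2:ℝ) ^ n • x‖ p / (1 - r))) :=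
          mul_le_mul_of_nonneg_left (h3' _) (by positivity)
      _ = ((1 / 16) * (θ₂ * pp ‖x‖ p / (1 - r))) * r ^ n := by
          rw [ppkey n x, hr8, div_pow]; ring
  have hzt : Filter.Tendsto (fun n => g n x - T' x) Filter.atTop (nhds 0) := by
    apply squeeze_zero_norm hnle
    simpa using
      (tendsto_pow_atTop_nhds_zero_of_lt_one hr_pos.le hr_lt).const_mul
        ((1 / 16) * (θ₂ * pp ‖x‖ p / (1 - r)))
  have hT' : Filter.Tendsto (fun n => g n x) Filter.atTop (nhds (T' x)) := by
    have := hzt.add_const (T' x)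
    simpa using this
  exact tendsto_nhds_unique hT' (hT x)
end

section
/- Let A be a Banach algebra and θ₁, θ₂ ≥ 0. Suppose f: A → A satisfies ‖f(xy) − f(x)f(y)‖ ≤ θ₁ and ‖f(2x+y) + f(2x−y) − 2f(x+y) − 2f(x−y) − 12f(x)‖ ≤ θ₂ for all x, y ∈ A. Then there exists a unique cubic homomorphism T: A → A such that ‖T(x) − f(x)‖ ≤ θ₂/14 for all x ∈ A. -/
open Filter Topology

theorem cubic_homomorphism_stability_const
    {A : Type*} [NormedRing A] [NormedAlgebra ℝ A] [CompleteSpace A]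
    (f : A → A) (θ₁ θ₂ : ℝ) (hθ₁ : 0 ≤ θ₁) (hθ₂ : 0 ≤ θ₂)
    (h1 : ∀ x y : A, ‖f (x * y) - f x * f y‖ ≤ θ₁)
    (h2 : ∀ x y : A, ‖f ((2:ℝ) • x + y) + f ((2:ℝ) • x - y)
        - (2:ℝ) • f (x + y) - (2:ℝ) • f (x - y) - (12:ℝ) • f x‖ ≤ θ₂) :
    ∃! T : A → A,
      (∀ x y : A, T (x * y) = T x * T y) ∧
      (∀ x y : A, T ((2:ℝ) • x + y) + T ((2:ℝ) • x - y)
        = (2:ℝ) • T (x + y) + (2:ℝ) • T (x - y) + (12:ℝ) • T x) ∧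
      (∀ x : A, ‖T x - f x‖ ≤ θ₂ / 14) := by
  set g : ℕ → A → A := fun n x => ((8:ℝ)⁻¹)^n • f ((2:ℝ)^n • x) with hg
  -- basic consequence of h2 with y = 0
  have key : ∀ u : A, ‖f ((2:ℝ) • u) - (8:ℝ) • f u‖ ≤ θ₂ / 2 := by
    intro u
    have h := h2 u 0
    simp only [add_zero, sub_zero] at h
    have e : f ((2:ℝ)•u) + f ((2:ℝ)•u) - (2:ℝ)•f u - (2:ℝ)•f u - (12:ℝ)•f u
        = (2:ℝ) • (f ((2:ℝ)•u) - (8:ℝ)•f u) := by module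
    rw [e, norm_smul] at h
    simp only [Real.norm_ofNat] at h
    linarith
  have arg : ∀ (n : ℕ) (x : A), (2:ℝ)^(n+1) • x = (2:ℝ) • ((2:ℝ)^n • x) := by
    intro n x
    rw [pow_succ, mul_comm, mul_smul]
  have step : ∀ (n : ℕ) (x : A), ‖g n x - g (n+1) x‖ ≤ (θ₂/16) * ((8:ℝ)⁻¹)^n := by
    intro n x
    have e : g n x - g (n+1) x
        = -(((8:ℝ)⁻¹)^(n+1) • (f ((2:ℝ) • ((2:ℝ)^n • x)) - (8:ℝ) • f ((2:ℝ)^n • x))) := by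
      simp only [hg, arg n x]
      module
    rw [e, norm_neg, norm_smul]
    have h8 : ‖((8:ℝ)⁻¹)^(n+1)‖ = ((8:ℝ)⁻¹)^(n+1) := by
      rw [Real.norm_eq_abs, abs_pow]; norm_num
    rw [h8]
    calc ((8:ℝ)⁻¹)^(n+1) * ‖f ((2:ℝ) • ((2:ℝ)^n • x)) - (8:ℝ) • f ((2:ℝ)^n • x)‖
        ≤ ((8:ℝ)⁻¹)^(n+1) * (θ₂/2) := by
          apply mul_le_mul_of_nonneg_left (key _) (by positivity)
      _ = (θ₂/16) * ((8:ℝ)⁻¹)^n := by ring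
  have hcau : ∀ x : A, CauchySeq (fun n => g n x) := by
    intro x
    refine cauchySeq_of_le_geometric ((8:ℝ)⁻¹) (θ₂/16) (by norm_num) ?_
    intro n
    rw [dist_eq_norm]
    exact step n x
  choose T hT using fun x => cauchySeq_tendsto_of_complete (hcau x)
  have g0 : ∀ x : A, g 0 x = f x := by intro x; simp [hg]
  -- bound
  have hbound : ∀ x : A, ‖T x - f x‖ ≤ θ₂ / 14 := by
    intro x
    have := dist_le_of_le_geometric_of_tendsto₀ ((8:ℝ)⁻¹) (θ₂/16) (by norm_num)
      (fun n => by rw [dist_eq_norm]; exact step n x) (hT x)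
    rw [g0, dist_eq_norm, ← norm_neg, neg_sub] at this
    calc ‖T x - f x‖ ≤ (θ₂/16) / (1 - (8:ℝ)⁻¹) := this
      _ = θ₂ / 14 := by ring
  -- auxiliary limits
  have hgeo : Tendsto (fun n : ℕ => ((8:ℝ)⁻¹)^n) atTop (𝓝 0) :=
    tendsto_pow_atTop_nhds_zero_of_lt_one (by norm_num) (by norm_num)
  -- cubic equation
  have hcubic : ∀ x y : A, T ((2:ℝ) • x + y) + T ((2:ℝ) • x - y)
      = (2:ℝ) • T (x + y) + (2:ℝ) • T (x - y) + (12:ℝ) • T x := by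
    intro x y
    set s : ℕ → A := fun n => g n ((2:ℝ)•x+y) + g n ((2:ℝ)•x-y)
      - (2:ℝ) • g n (x+y) - (2:ℝ) • g n (x-y) - (12:ℝ) • g n x with hs
    have hsn : ∀ n, ‖s n‖ ≤ θ₂ * ((8:ℝ)⁻¹)^n := by
      intro n
      have e : s n = ((8:ℝ)⁻¹)^n • (f ((2:ℝ) • ((2:ℝ)^n • x) + (2:ℝ)^n • y)
          + f ((2:ℝ) • ((2:ℝ)^n • x) - (2:ℝ)^n • y)
          - (2:ℝ) • f ((2:ℝ)^n • x + (2:ℝ)^n • y)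
          - (2:ℝ) • f ((2:ℝ)^n • x - (2:ℝ)^n • y)
          - (12:ℝ) • f ((2:ℝ)^n • x)) := by
        have a1 : (2:ℝ)^n • ((2:ℝ)•x+y) = (2:ℝ) • ((2:ℝ)^n • x) + (2:ℝ)^n • y := by
          rw [smul_add, smul_comm]
        have a2 : (2:ℝ)^n • ((2:ℝ)•x-y) = (2:ℝ) • ((2:ℝ)^n • x) - (2:ℝ)^n • y := by
          rw [smul_sub, smul_comm]
        have a3 : (2:ℝ)^n • (x+y) = (2:ℝ)^n • x + (2:ℝ)^n • y := smul_add _ _ _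
        have a4 : (2:ℝ)^n • (x-y) = (2:ℝ)^n • x - (2:ℝ)^n • y := smul_sub _ _ _
        simp only [hs, hg, a1, a2, a3, a4]
        module
      rw [e, norm_smul, Real.norm_eq_abs, abs_pow]
      have h8 : |(8:ℝ)⁻¹| = (8:ℝ)⁻¹ := by norm_num
      rw [h8, mul_comm]
      exact mul_le_mul_of_nonneg_right (h2 _ _) (by positivity)
    have hlim : Tendsto s atTop (𝓝 (T ((2:ℝ)•x+y) + T ((2:ℝ)•x-y)
        - (2:ℝ) • T (x+y) - (2:ℝ) • T (x-y) - (12:ℝ) • T x)) :=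
      ((((hT _).add (hT _)).sub ((hT _).const_smul _)).sub
        ((hT _).const_smul _)).sub ((hT _).const_smul _)
    have hzero : Tendsto s atTop (𝓝 0) := by
      apply squeeze_zero_norm hsn
      simpa using hgeo.const_mul θ₂
    have h14 := tendsto_nhds_unique hlim hzero
    rw [sub_sub, sub_sub, sub_eq_zero] at h14
    rw [h14]; abel
  -- multiplicativity
  have hmul : ∀ x y : A, T (x * y) = T x * T y := by
    intro x y
    set d : ℕ → A := fun n => g (2*n) (x*y) - g n x * g n y with hd
    have hdn : ∀ n, ‖d n‖ ≤ θ₁ * (((8:ℝ)⁻¹)^2)^n := by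
      intro n
      have e : d n = (((8:ℝ)⁻¹)^2)^n • (f (((2:ℝ)^n • x) * ((2:ℝ)^n • y))
          - f ((2:ℝ)^n • x) * f ((2:ℝ)^n • y)) := by
        have a1 : (2:ℝ)^(2*n) • (x*y) = ((2:ℝ)^n • x) * ((2:ℝ)^n • y) := by
          rw [smul_mul_smul_comm]; congr 1; ring
        have a2 : (((8:ℝ)⁻¹)^n • f ((2:ℝ)^n • x)) * (((8:ℝ)⁻¹)^n • f ((2:ℝ)^n • y))
            = (((8:ℝ)⁻¹)^(2*n)) • (f ((2:ℝ)^n • x) * f ((2:ℝ)^n • y)) := by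
          rw [smul_mul_smul_comm, ← pow_add, two_mul]
        have a3 : (((8:ℝ)⁻¹)^2)^n = ((8:ℝ)⁻¹)^(2*n) := by rw [← pow_mul, mul_comm]
        simp only [hd, hg, a1, a2, a3]
        rw [smul_sub]
      rw [e, norm_smul, Real.norm_eq_abs, abs_pow, abs_pow]
      have h8 : |(8:ℝ)⁻¹| = (8:ℝ)⁻¹ := by norm_num
      rw [h8, mul_comm]
      exact mul_le_mul_of_nonneg_right (h1 _ _) (by positivity)
    have h2n : Tendsto (fun n : ℕ => 2 * n) atTop atTop :=
      tendsto_atTop_mono (f := id) (fun n => by simp only [id_eq]; omega) tendsto_id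
    have hsub : Tendsto (fun n => g (2*n) (x*y)) atTop (𝓝 (T (x*y))) :=
      (hT (x*y)).comp h2n
    have hlim : Tendsto d atTop (𝓝 (T (x*y) - T x * T y)) :=
      hsub.sub ((hT x).mul (hT y))
    have hzero : Tendsto d atTop (𝓝 0) := by
      apply squeeze_zero_norm hdn
      have : Tendsto (fun n : ℕ => (((8:ℝ)⁻¹)^2)^n) atTop (𝓝 0) :=
        tendsto_pow_atTop_nhds_zero_of_lt_one (by norm_num) (by norm_num)
      simpa using this.const_mul θ₁
    have := tendsto_nhds_unique hlim hzero
    rw [sub_eq_zero] at this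
    exact this
  refine ⟨T, ⟨hmul, hcubic, hbound⟩, ?_⟩
  -- uniqueness
  rintro T' ⟨-, hc', hb'⟩
  funext x
  -- T' 0 = 0 and doubling
  have hdou : ∀ z : A, T' ((2:ℝ) • z) = (8:ℝ) • T' z := by
    intro z
    have h := hc' z 0
    simp only [add_zero, sub_zero] at h
    have : (2:ℝ) • T' ((2:ℝ) • z) = (2:ℝ) • ((8:ℝ) • T' z) := by
      rw [smul_smul]
      linear_combination (norm := module) h
    exact smul_right_injective A (by norm_num : (2:ℝ) ≠ 0) this
  have hpow : ∀ (n : ℕ) (z : A), T' ((2:ℝ)^n • z) = ((8:ℝ)^n) • T' z := by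
    intro n
    induction n with
    | zero => intro z; simp
    | succ n ih =>
      intro z
      rw [arg n z, hdou, ih, smul_smul, pow_succ, mul_comm]
  have hlim' : Tendsto (fun n => g n x) atTop (𝓝 (T' x)) := by
    have hb : ∀ n : ℕ, ‖g n x - T' x‖ ≤ (θ₂/14) * ((8:ℝ)⁻¹)^n := by
      intro n
      have e : g n x - T' x = ((8:ℝ)⁻¹)^n • (f ((2:ℝ)^n • x) - T' ((2:ℝ)^n • x)) := by
        rw [smul_sub, hpow n x, smul_smul, ← mul_pow]
        norm_num [hg]
      rw [e, norm_smul, Real.norm_eq_abs, abs_pow]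
      have h8 : |(8:ℝ)⁻¹| = (8:ℝ)⁻¹ := by norm_num
      rw [h8, mul_comm]
      refine mul_le_mul_of_nonneg_right ?_ (by positivity)
      rw [← norm_neg, neg_sub]
      exact hb' _
    have : Tendsto (fun n => g n x - T' x) atTop (𝓝 0) := by
      apply squeeze_zero_norm hb
      simpa using hgeo.const_mul (θ₂/14)
    have := this.add_const (T' x)
    simpa using this
  exact tendsto_nhds_unique hlim' (hT x)
end

section
/- Let A be a Banach algebra, p < 3, θ > 0, and φ: A × A → ℝ≥0 with lim_{n→∞} φ(2ⁿx, 2ⁿy)/2^{6n} = 0 for all x, y ∈ A. If f: A → A satisfies ‖f(xy) − f(x)f(y)‖ ≤ φ(x,y) and ‖f(2x+y) + f(2x−y) − 2f(x+y) − 2f(x−y) − 12f(x)‖ ≤ θ‖y‖^p for all x, y ∈ A, then f itself is a cubic homomorphism, i.e., f(xy) = f(x)f(y) and f(2x+y) + f(2x−y) = 2f(x+y) + 2f(x−y) + 12f(x) for all x, y ∈ A. -/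
theorem cubic_superstability
    {A : Type*} [NormedRing A] [NormedAlgebra ℝ A] [CompleteSpace A]
    (f : A → A) (φ : A → A → ℝ) (hφ : ∀ x y, 0 ≤ φ x y) (θ p : ℝ)
    (hθ : 0 < θ) (hp : p < 3)
    (hlim : ∀ x y : A, Filter.Tendsto
      (fun n : ℕ => φ ((2:ℝ) ^ n • x) ((2:ℝ) ^ n • y) / 2 ^ (6 * n))
      Filter.atTop (nhds 0))
    (h1 : ∀ x y : A, ‖f (x * y) - f x * f y‖ ≤ φ x y)
    (h2 : ∀ x y : A, ‖f ((2:ℝ) • x + y) + f ((2:ℝ) • x - y)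
        - (2:ℝ) • f (x + y) - (2:ℝ) • f (x - y) - (12:ℝ) • f x‖ ≤ θ * pp ‖y‖ p) :
    (∀ x y : A, f (x * y) = f x * f y) ∧
    (∀ x y : A, f ((2:ℝ) • x + y) + f ((2:ℝ) • x - y)
      = (2:ℝ) • f (x + y) + (2:ℝ) • f (x - y) + (12:ℝ) • f x) := by
  -- f(2x) = 8 f(x)
  have hE : ∀ x : A, f ((2:ℝ) • x) = (8:ℝ) • f x := by
    intro x
    have h := h2 x 0
    simp only [add_zero, sub_zero, norm_zero, pp, if_true, if_pos rfl, mul_zero] at h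
    norm_num at h
    have h0 : f ((2:ℝ) • x) + f ((2:ℝ) • x) - (2:ℝ) • f x - (2:ℝ) • f x - (12:ℝ) • f x
        = (2:ℝ) • (f ((2:ℝ) • x) - (8:ℝ) • f x) := by
      rw [smul_sub]
      module
    rw [h0] at h
    have h2ne : (2:ℝ) ≠ 0 := two_ne_zero
    have := smul_eq_zero.mp h
    rcases this with h' | h'
    · exact absurd h' h2ne
    · exact sub_eq_zero.mp h'
  have hEn : ∀ (n : ℕ) (x : A), f ((2:ℝ) ^ n • x) = (8:ℝ) ^ n • f x := by
    intro n
    induction n with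
    | zero => simp
    | succ n ih =>
      intro x
      have : (2:ℝ) ^ (n + 1) • x = (2:ℝ) ^ n • ((2:ℝ) • x) := by
        rw [smul_smul, pow_succ]
      rw [this, ih, hE, smul_smul, pow_succ]
  constructor
  · intro x y
    have key : ∀ n : ℕ, ‖f (x * y) - f x * f y‖ ≤
        φ ((2:ℝ) ^ n • x) ((2:ℝ) ^ n • y) / 2 ^ (6 * n) := by
      intro n
      have hmul : ((2:ℝ) ^ n • x) * ((2:ℝ) ^ n • y) = ((2:ℝ) ^ (2 * n)) • (x * y) := by
        rw [smul_mul_smul_comm, ← pow_add, two_mul]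
      have h := h1 ((2:ℝ) ^ n • x) ((2:ℝ) ^ n • y)
      rw [hmul, hEn, hEn, hEn, smul_mul_smul_comm, ← pow_add] at h
      have h8 : (8:ℝ) ^ (n + n) = 2 ^ (6 * n) := by
        rw [show (8:ℝ) = 2 ^ 3 by norm_num, ← pow_mul]
        ring_nf
      have hnorm : ‖(8:ℝ) ^ (2 * n) • f (x * y) - (8:ℝ) ^ (n + n) • (f x * f y)‖
          = 2 ^ (6 * n) * ‖f (x * y) - f x * f y‖ := by
        rw [show 2 * n = n + n by ring, ← smul_sub, norm_smul, h8]
        simp [abs_of_nonneg (by positivity : (0:ℝ) ≤ (2:ℝ) ^ (6 * n))]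
      rw [hnorm] at h
      rw [le_div_iff₀ (by positivity)]
      linarith
    have h0 : ‖f (x * y) - f x * f y‖ ≤ 0 := ge_of_tendsto' (hlim x y) key
    exact sub_eq_zero.mp (norm_le_zero_iff.mp h0)
  · intro x y
    set d := f ((2:ℝ) • x + y) + f ((2:ℝ) • x - y)
      - (2:ℝ) • f (x + y) - (2:ℝ) • f (x - y) - (12:ℝ) • f x with hd
    suffices hd0 : d = 0 by
      have : f ((2:ℝ) • x + y) + f ((2:ℝ) • x - y)
          - ((2:ℝ) • f (x + y) + (2:ℝ) • f (x - y) + (12:ℝ) • f x) = 0 := by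
        rw [← hd0, hd]; abel
      linear_combination (norm := abel) this
    by_cases hy : y = 0
    · have h := hE x
      rw [hd, hy]
      simp only [add_zero, sub_zero]
      rw [h]
      module
    · have key : ∀ n : ℕ, ‖d‖ ≤ θ * ‖y‖ ^ p * ((2:ℝ) ^ (p - 3)) ^ n := by
        intro n
        have h := h2 ((2:ℝ) ^ n • x) ((2:ℝ) ^ n • y)
        have e1 : (2:ℝ) • ((2:ℝ) ^ n • x) + (2:ℝ) ^ n • y = (2:ℝ) ^ n • ((2:ℝ) • x + y) := by
          rw [smul_add, smul_smul, smul_smul]; ring_nf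
        have e2 : (2:ℝ) • ((2:ℝ) ^ n • x) - (2:ℝ) ^ n • y = (2:ℝ) ^ n • ((2:ℝ) • x - y) := by
          rw [smul_sub, smul_smul, smul_smul]; ring_nf
        have e3 : (2:ℝ) ^ n • x + (2:ℝ) ^ n • y = (2:ℝ) ^ n • (x + y) := by rw [smul_add]
        have e4 : (2:ℝ) ^ n • x - (2:ℝ) ^ n • y = (2:ℝ) ^ n • (x - y) := by rw [smul_sub]
        rw [e1, e2, e3, e4, hEn, hEn, hEn, hEn, hEn] at h
        have hnorm : ‖(8:ℝ) ^ n • f ((2:ℝ) • x + y) + (8:ℝ) ^ n • f ((2:ℝ) • x - y)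
            - (2:ℝ) • (8:ℝ) ^ n • f (x + y) - (2:ℝ) • (8:ℝ) ^ n • f (x - y)
            - (12:ℝ) • (8:ℝ) ^ n • f x‖ = (8:ℝ) ^ n * ‖d‖ := by
          have : (8:ℝ) ^ n • f ((2:ℝ) • x + y) + (8:ℝ) ^ n • f ((2:ℝ) • x - y)
              - (2:ℝ) • (8:ℝ) ^ n • f (x + y) - (2:ℝ) • (8:ℝ) ^ n • f (x - y)
              - (12:ℝ) • (8:ℝ) ^ n • f x = (8:ℝ) ^ n • d := by
            rw [hd]; module
          rw [this, norm_smul]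
          simp [abs_of_nonneg (by positivity : (0:ℝ) ≤ (8:ℝ) ^ n)]
        rw [hnorm] at h
        have hyn : ‖(2:ℝ) ^ n • y‖ = (2:ℝ) ^ n * ‖y‖ := by
          rw [norm_smul]
          simp [abs_of_nonneg (by positivity : (0:ℝ) ≤ (2:ℝ) ^ n)]
        have hyne : (2:ℝ) ^ n * ‖y‖ ≠ 0 := by
          have : ‖y‖ ≠ 0 := norm_ne_zero_iff.mpr hy
          positivity
        rw [hyn] at h
        have hpp : pp ((2:ℝ) ^ n * ‖y‖) p = ((2:ℝ) ^ n) ^ p * ‖y‖ ^ p := by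
          rw [pp, if_neg hyne, Real.mul_rpow (by positivity) (norm_nonneg y)]
        rw [hpp] at h
        -- now : 8^n * ‖d‖ ≤ θ * ((2^n)^p * ‖y‖^p)
        have h8 : (8:ℝ) ^ n = (2:ℝ) ^ ((3:ℝ) * n) := by
          rw [show (8:ℝ) = 2 ^ (3:ℝ) by
            rw [show (3:ℝ) = ((3:ℕ):ℝ) by norm_num, Real.rpow_natCast]; norm_num,
            ← Real.rpow_natCast ((2:ℝ) ^ (3:ℝ)) n, ← Real.rpow_mul (by norm_num)]
        have h2p : ((2:ℝ) ^ n) ^ p = (2:ℝ) ^ (p * n) := by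
          rw [← Real.rpow_natCast (2:ℝ) n, ← Real.rpow_mul (by norm_num)]
          ring_nf
        have hq : ((2:ℝ) ^ (p - 3)) ^ n = (2:ℝ) ^ (p * n) / (2:ℝ) ^ ((3:ℝ) * n) := by
          rw [← Real.rpow_natCast ((2:ℝ) ^ (p - 3)) n, ← Real.rpow_mul (by norm_num),
            ← Real.rpow_sub (by norm_num)]
          ring_nf
        rw [h8, h2p] at h
        rw [mul_assoc, hq]
        have hpos : (0:ℝ) < (2:ℝ) ^ ((3:ℝ) * n) := Real.rpow_pos_of_pos (by norm_num) _
        rw [← mul_div_assoc, ← mul_div_assoc, le_div_iff₀ hpos]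
        ring_nf at h ⊢
        linarith
      have hlt : (2:ℝ) ^ (p - 3) < 1 :=
        Real.rpow_lt_one_of_one_lt_of_neg (by norm_num) (by linarith)
      have hge : (0:ℝ) ≤ (2:ℝ) ^ (p - 3) := (Real.rpow_pos_of_pos (by norm_num) _).le
      have htend : Filter.Tendsto (fun n : ℕ => θ * ‖y‖ ^ p * ((2:ℝ) ^ (p - 3)) ^ n)
          Filter.atTop (nhds 0) := by
        have := tendsto_pow_atTop_nhds_zero_of_lt_one hge hlt
        simpa using this.const_mul (θ * ‖y‖ ^ p)
      have h0 : ‖d‖ ≤ 0 := ge_of_tendsto' htend key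
      exact norm_le_zero_iff.mp h0
end

section
/- Let A be a Banach algebra, p, q, θ ≥ 0 with p + q < 3, and φ: A × A → ℝ≥0 with lim_{n→∞} φ(2ⁿx, 2ⁿy)/2^{6n} = 0 for all x, y ∈ A. If f: A → A satisfies ‖f(xy) − f(x)f(y)‖ ≤ φ(x,y) and ‖f(2x+y) + f(2x−y) − 2f(x+y) − 2f(x−y) − 12f(x)‖ ≤ θ‖x‖^q‖y‖^p for all x, y ∈ A, then f is a cubic homomorphism. -/
theorem cubic_superstability_mixed_powers
    {A : Type*} [NormedRing A] [NormedAlgebra ℝ A] [CompleteSpace A]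
    (f : A → A) (φ : A → A → ℝ) (hφ : ∀ x y, 0 ≤ φ x y) (θ p q : ℝ)
    (hθ : 0 ≤ θ) (hp : 0 ≤ p) (hq : 0 ≤ q) (hpq : p + q < 3)
    (hlim : ∀ x y : A, Filter.Tendsto
      (fun n : ℕ => φ ((2:ℝ) ^ n • x) ((2:ℝ) ^ n • y) / 2 ^ (6 * n))
      Filter.atTop (nhds 0))
    (h1 : ∀ x y : A, ‖f (x * y) - f x * f y‖ ≤ φ x y)
    (h2 : ∀ x y : A, ‖f ((2:ℝ) • x + y) + f ((2:ℝ) • x - y)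
        - (2:ℝ) • f (x + y) - (2:ℝ) • f (x - y) - (12:ℝ) • f x‖
        ≤ θ * pp ‖x‖ q * pp ‖y‖ p) :
    (∀ x y : A, f (x * y) = f x * f y) ∧
    (∀ x y : A, f ((2:ℝ) • x + y) + f ((2:ℝ) • x - y)
      = (2:ℝ) • f (x + y) + (2:ℝ) • f (x - y) + (12:ℝ) • f x) := by
  -- Step 1: exact doubling `f (2x) = 8 f x`
  have hdbl : ∀ x : A, f ((2:ℝ) • x) = (8:ℝ) • f x := by
    intro x
    have h := h2 x 0
    have hb : θ * pp ‖x‖ q * pp ‖(0:A)‖ p = 0 := by simp [pp]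
    rw [hb] at h
    simp only [add_zero, sub_zero] at h
    have h0 : f ((2:ℝ)•x) + f ((2:ℝ)•x) - (2:ℝ)•f x - (2:ℝ)•f x - (12:ℝ)•f x = 0 :=
      norm_le_zero_iff.mp h
    have h16 : (2:ℝ) • f ((2:ℝ)•x) = (16:ℝ) • f x := by
      have e : (2:ℝ)•f ((2:ℝ)•x) - (16:ℝ)•f x
          = f ((2:ℝ)•x) + f ((2:ℝ)•x) - (2:ℝ)•f x - (2:ℝ)•f x - (12:ℝ)•f x := by module
      exact sub_eq_zero.mp (e.trans h0)
    have h8 := congrArg (fun v => ((2:ℝ)⁻¹) • v) h16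
    simpa [smul_smul, show (2:ℝ)⁻¹ * 2 = 1 by norm_num,
      show (2:ℝ)⁻¹ * 16 = 8 by norm_num] using h8
  -- Step 2: `f (2^n x) = 8^n f x`
  have hpow : ∀ (n : ℕ) (x : A), f (((2:ℝ)^n) • x) = ((8:ℝ)^n) • f x := by
    intro n
    induction n with
    | zero => intro x; simp
    | succ n ih =>
      intro x
      have e : ((2:ℝ)^(n+1)) • x = ((2:ℝ)^n) • ((2:ℝ) • x) := by
        rw [smul_smul, ← pow_succ]
      rw [e, ih, hdbl, smul_smul, ← pow_succ]
  constructor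
  · -- multiplicativity
    intro x y
    have key : ∀ n : ℕ, ‖f (x*y) - f x * f y‖
        ≤ φ ((2:ℝ)^n • x) ((2:ℝ)^n • y) / 2 ^ (6*n) := by
      intro n
      have h := h1 ((2:ℝ)^n • x) ((2:ℝ)^n • y)
      have e1 : ((2:ℝ)^n • x) * ((2:ℝ)^n • y) = ((2:ℝ)^n) • (((2:ℝ)^n) • (x*y)) := by
        rw [smul_mul_smul_comm, smul_smul]
      rw [e1, hpow, hpow, hpow, hpow, smul_smul, smul_mul_smul_comm,
        ← smul_sub, norm_smul] at h
      have e2 : ‖(8:ℝ)^n * (8:ℝ)^n‖ = 2 ^ (6*n) := by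
        rw [Real.norm_eq_abs, abs_of_nonneg (by positivity),
          show (8:ℝ) = 2^3 by norm_num, ← pow_mul, ← pow_add]
        ring_nf
      rw [e2] at h
      have hpos : (0:ℝ) < 2 ^ (6*n) := by positivity
      rw [le_div_iff₀ hpos]
      linarith [h]
    have hle : ‖f (x*y) - f x * f y‖ ≤ 0 := ge_of_tendsto' (hlim x y) key
    rw [← sub_eq_zero]
    exact norm_le_zero_iff.mp hle
  · -- cubic equation
    intro x y
    rw [← sub_eq_zero]
    by_cases hx : x = 0
    · have h := h2 x y
      have hb : θ * pp ‖x‖ q * pp ‖y‖ p = 0 := by simp [pp, hx]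
      rw [hb] at h
      have h0 := norm_le_zero_iff.mp h
      rw [← h0]; module
    by_cases hy : y = 0
    · have h := h2 x y
      have hb : θ * pp ‖x‖ q * pp ‖y‖ p = 0 := by simp [pp, hy]
      rw [hb] at h
      have h0 := norm_le_zero_iff.mp h
      rw [← h0]; module
    -- main case: scale by 2^n and use p + q < 3
    set E := f ((2:ℝ) • x + y) + f ((2:ℝ) • x - y)
        - ((2:ℝ) • f (x + y) + (2:ℝ) • f (x - y) + (12:ℝ) • f x) with hE
    set r : ℝ := (2:ℝ) ^ (p+q) / 8 with hr
    have hr0 : 0 ≤ r := by positivity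
    have hr1 : r < 1 := by
      rw [hr, div_lt_one (by norm_num)]
      calc (2:ℝ) ^ (p+q) < (2:ℝ) ^ (3:ℝ) :=
            (Real.rpow_lt_rpow_left_iff (by norm_num)).mpr hpq
        _ = 8 := by
            rw [show (3:ℝ) = ((3:ℕ):ℝ) by norm_num, Real.rpow_natCast]; norm_num
    set K : ℝ := θ * ‖x‖ ^ q * ‖y‖ ^ p with hK
    have key : ∀ n : ℕ, ‖E‖ ≤ K * r ^ n := by
      intro n
      have h := h2 ((2:ℝ)^n • x) ((2:ℝ)^n • y)
      have e1 : (2:ℝ) • ((2:ℝ)^n • x) + (2:ℝ)^n • y = ((2:ℝ)^n) • ((2:ℝ) • x + y) := by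
        rw [smul_add, smul_smul, smul_smul, mul_comm]
      have e2 : (2:ℝ) • ((2:ℝ)^n • x) - (2:ℝ)^n • y = ((2:ℝ)^n) • ((2:ℝ) • x - y) := by
        rw [smul_sub, smul_smul, smul_smul, mul_comm]
      have e3 : (2:ℝ)^n • x + (2:ℝ)^n • y = ((2:ℝ)^n) • (x + y) := by rw [smul_add]
      have e4 : (2:ℝ)^n • x - (2:ℝ)^n • y = ((2:ℝ)^n) • (x - y) := by rw [smul_sub]
      rw [e1, e2, e3, e4, hpow, hpow, hpow, hpow, hpow] at h
      have e5 : ((8:ℝ)^n) • f ((2:ℝ) • x + y) + ((8:ℝ)^n) • f ((2:ℝ) • x - y)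
          - (2:ℝ) • ((8:ℝ)^n) • f (x + y) - (2:ℝ) • ((8:ℝ)^n) • f (x - y)
          - (12:ℝ) • ((8:ℝ)^n) • f x = ((8:ℝ)^n) • E := by
        rw [hE]; module
      rw [e5, norm_smul, Real.norm_eq_abs, abs_of_nonneg (by positivity)] at h
      -- rewrite the right-hand side bound
      have hbase : ∀ c : ℝ, ((2:ℝ)^n : ℝ) ^ c = ((2:ℝ)^c)^n := by
        intro c
        rw [← Real.rpow_natCast 2 n, ← Real.rpow_mul (by norm_num : (0:ℝ) ≤ 2),
          mul_comm, Real.rpow_mul (by norm_num : (0:ℝ) ≤ 2), Real.rpow_natCast]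
      have hppz : ∀ (z : A) (c : ℝ), z ≠ 0 →
          pp ‖(2:ℝ)^n • z‖ c = ((2:ℝ)^c)^n * ‖z‖ ^ c := by
        intro z c hz
        have hzn : (2:ℝ)^n • z ≠ 0 := smul_ne_zero (by positivity) hz
        rw [pp, if_neg (norm_ne_zero_iff.mpr hzn), norm_smul, Real.norm_eq_abs,
          abs_of_nonneg (by positivity : (0:ℝ) ≤ (2:ℝ)^n),
          Real.mul_rpow (by positivity) (norm_nonneg z), hbase]
      rw [hppz x q hx, hppz y p hy] at h
      have hqp : (2:ℝ)^q * (2:ℝ)^p = (2:ℝ)^(p+q) := by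
        rw [← Real.rpow_add (by norm_num : (0:ℝ) < 2), add_comm]
      have hR : θ * (((2:ℝ)^q)^n * ‖x‖^q) * (((2:ℝ)^p)^n * ‖y‖^p)
          = (θ * ‖x‖^q * ‖y‖^p) * ((2:ℝ)^(p+q))^n := by
        rw [← hqp, mul_pow]; ring
      rw [hR] at h
      rw [hK, hr, div_pow, ← mul_div_assoc, le_div_iff₀ (by positivity : (0:ℝ) < (8:ℝ)^n)]
      linarith [h]
    have h0 : Filter.Tendsto (fun n : ℕ => K * r ^ n) Filter.atTop (nhds 0) := by
      have := (tendsto_pow_atTop_nhds_zero_of_lt_one hr0 hr1).const_mul K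
      simpa using this
    have hle : ‖E‖ ≤ 0 := ge_of_tendsto' h0 key
    exact norm_le_zero_iff.mp hle
end

section
/- Let A be a Banach algebra, f: A → A, and φ₁, φ₂: A × A → ℝ≥0 such that ‖f(xy) − f(x)f(y)‖ ≤ φ₁(x,y) and ‖f(2x+y) + f(2x−y) − 2f(x+y) − 2f(x−y) − 12f(x)‖ ≤ φ₂(x,y) for all x, y ∈ A. Assume Ψ(x,y) = Σ_{i=1}^∞ 2^{3i}φ₂(x/2ⁱ, y/2ⁱ) converges for all x,y and lim_{n→∞} 2^{6n}φ₁(x/2ⁿ, y/2ⁿ) = 0 for all x,y. Then there exists a unique cubic homomorphism T: A → A with ‖T(x) − f(x)‖ ≤ (1/16)Ψ(x, 0) for all x ∈ A. -/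
open Filter Topology

theorem cubic_homomorphism_stability_divided
    {A : Type*} [NormedRing A] [NormedAlgebra ℝ A] [CompleteSpace A]
    (f : A → A) (φ₁ φ₂ : A → A → ℝ)
    (hφ₁ : ∀ x y, 0 ≤ φ₁ x y) (hφ₂ : ∀ x y, 0 ≤ φ₂ x y)
    (h1 : ∀ x y : A, ‖f (x * y) - f x * f y‖ ≤ φ₁ x y)
    (h2 : ∀ x y : A, ‖f ((2:ℝ) • x + y) + f ((2:ℝ) • x - y)
        - (2:ℝ) • f (x + y) - (2:ℝ) • f (x - y) - (12:ℝ) • f x‖ ≤ φ₂ x y)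
    (hΨ : ∀ x y : A, Summable (fun i : ℕ =>
      (2:ℝ) ^ (3 * (i + 1)) * φ₂ (((1:ℝ) / 2 ^ (i + 1)) • x) (((1:ℝ) / 2 ^ (i + 1)) • y)))
    (hlim : ∀ x y : A, Filter.Tendsto
      (fun n : ℕ => (2:ℝ) ^ (6 * n) * φ₁ (((1:ℝ) / 2 ^ n) • x) (((1:ℝ) / 2 ^ n) • y))
      Filter.atTop (nhds 0)) :
    ∃! T : A → A,
      (∀ x y : A, T (x * y) = T x * T y) ∧
      (∀ x y : A, T ((2:ℝ) • x + y) + T ((2:ℝ) • x - y)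
        = (2:ℝ) • T (x + y) + (2:ℝ) • T (x - y) + (12:ℝ) • T x) ∧
      (∀ x : A, ‖T x - f x‖
        ≤ (1 / 16) * ∑' i : ℕ, (2:ℝ) ^ (3 * (i + 1)) * φ₂ (((1:ℝ) / 2 ^ (i + 1)) • x) 0) := by
  classical
  have hpow3 : ∀ n : ℕ, (2:ℝ) ^ (3 * n) = 8 ^ n := fun n => by rw [pow_mul]; norm_num
  have h8n : ∀ n : ℕ, ‖(8:ℝ) ^ n‖ = 8 ^ n := fun n => by
    rw [Real.norm_eq_abs, abs_of_nonneg (by positivity)]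
  set g : ℕ → A → A := fun n x => ((8:ℝ) ^ n) • f (((1:ℝ) / 2 ^ n) • x) with hgdef
  have harg : ∀ (n : ℕ) (x : A),
      ((1:ℝ) / 2 ^ n) • x = (2:ℝ) • (((1:ℝ) / 2 ^ (n+1)) • x) := by
    intro n x
    rw [smul_smul]
    congr 1
    rw [pow_succ]
    field_simp
  have hkey : ∀ u : A, ‖f ((2:ℝ) • u) - (8:ℝ) • f u‖ ≤ φ₂ u 0 / 2 := by
    intro u
    have h := h2 u 0
    simp only [add_zero, sub_zero] at h
    have e : f ((2:ℝ)•u) + f ((2:ℝ)•u) - (2:ℝ)•f u - (2:ℝ)•f u - (12:ℝ)•f u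
        = (2:ℝ) • (f ((2:ℝ)•u) - (8:ℝ) • f u) := by module
    rw [e, norm_smul, Real.norm_ofNat] at h
    linarith
  -- the distance between consecutive terms
  have hd : ∀ (x : A) (n : ℕ), dist (g n x) (g (n+1) x)
      ≤ (8:ℝ) ^ n / 2 * φ₂ (((1:ℝ) / 2 ^ (n+1)) • x) 0 := by
    intro x n
    have e : g n x - g (n+1) x
        = (8:ℝ) ^ n • (f ((2:ℝ) • (((1:ℝ) / 2 ^ (n+1)) • x)) - (8:ℝ) • f (((1:ℝ) / 2 ^ (n+1)) • x)) := by
      simp only [hgdef]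
      rw [harg n x, pow_succ]
      module
    rw [dist_eq_norm, e, norm_smul, h8n]
    have := hkey (((1:ℝ) / 2 ^ (n+1)) • x)
    calc (8:ℝ)^n * ‖f ((2:ℝ) • (((1:ℝ) / 2 ^ (n+1)) • x)) - (8:ℝ) • f (((1:ℝ) / 2 ^ (n+1)) • x)‖
        ≤ (8:ℝ)^n * (φ₂ (((1:ℝ) / 2 ^ (n+1)) • x) 0 / 2) :=
          mul_le_mul_of_nonneg_left this (by positivity)
      _ = (8:ℝ) ^ n / 2 * φ₂ (((1:ℝ) / 2 ^ (n+1)) • x) 0 := by ring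
  have hsum : ∀ x : A, Summable (fun n : ℕ => (8:ℝ) ^ n / 2 * φ₂ (((1:ℝ) / 2 ^ (n+1)) • x) 0) := by
    intro x
    have h := (hΨ x 0).mul_left (1/16)
    simp only [smul_zero] at h
    refine h.congr fun n => ?_
    rw [hpow3 (n+1), pow_succ]
    ring
  have hT : ∀ x : A, ∃ L, Tendsto (fun n => g n x) atTop (𝓝 L) := by
    intro x
    exact cauchySeq_tendsto_of_complete
      (cauchySeq_of_dist_le_of_summable _ (hd x) (hsum x))
  choose T hTtend using hT
  -- the approximation bound
  have hbound : ∀ x : A, ‖T x - f x‖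
      ≤ (1 / 16) * ∑' i : ℕ, (2:ℝ) ^ (3 * (i + 1)) * φ₂ (((1:ℝ) / 2 ^ (i + 1)) • x) 0 := by
    intro x
    have h := dist_le_tsum_of_dist_le_of_tendsto₀ _ (hd x) (hsum x) (hTtend x)
    have hg0 : g 0 x = f x := by simp [hgdef]
    rw [hg0, dist_eq_norm, norm_sub_rev] at h
    refine h.trans_eq ?_
    rw [← tsum_mul_left]
    congr 1
    funext n
    rw [hpow3 (n+1), pow_succ]
    ring
  -- the cubic functional equation for the approximants
  have hg_cubic : ∀ (n : ℕ) (x y : A),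
      ‖(g n ((2:ℝ)•x + y) + g n ((2:ℝ)•x - y))
        - ((2:ℝ)•g n (x+y) + (2:ℝ)•g n (x-y) + (12:ℝ)•g n x)‖
      ≤ (8:ℝ)^n * φ₂ (((1:ℝ)/2^n)•x) (((1:ℝ)/2^n)•y) := by
    intro n x y
    have h := h2 (((1:ℝ)/2^n)•x) (((1:ℝ)/2^n)•y)
    have e1 : ((1:ℝ)/2^n) • ((2:ℝ)•x + y) = (2:ℝ)•(((1:ℝ)/2^n)•x) + ((1:ℝ)/2^n)•y := by
      rw [smul_add, smul_comm]
    have e2 : ((1:ℝ)/2^n) • ((2:ℝ)•x - y) = (2:ℝ)•(((1:ℝ)/2^n)•x) - ((1:ℝ)/2^n)•y := by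
      rw [smul_sub, smul_comm]
    have e3 : ((1:ℝ)/2^n) • (x + y) = ((1:ℝ)/2^n)•x + ((1:ℝ)/2^n)•y := smul_add _ _ _
    have e4 : ((1:ℝ)/2^n) • (x - y) = ((1:ℝ)/2^n)•x - ((1:ℝ)/2^n)•y := smul_sub _ _ _
    have e : (g n ((2:ℝ)•x + y) + g n ((2:ℝ)•x - y))
        - ((2:ℝ)•g n (x+y) + (2:ℝ)•g n (x-y) + (12:ℝ)•g n x)
        = (8:ℝ)^n • (f ((2:ℝ)•(((1:ℝ)/2^n)•x) + ((1:ℝ)/2^n)•y)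
            + f ((2:ℝ)•(((1:ℝ)/2^n)•x) - ((1:ℝ)/2^n)•y)
            - (2:ℝ)•f (((1:ℝ)/2^n)•x + ((1:ℝ)/2^n)•y)
            - (2:ℝ)•f (((1:ℝ)/2^n)•x - ((1:ℝ)/2^n)•y)
            - (12:ℝ)•f (((1:ℝ)/2^n)•x)) := by
      simp only [hgdef, e1, e2, e3, e4]
      module
    rw [e, norm_smul, h8n]
    exact mul_le_mul_of_nonneg_left h (by positivity)
  -- the cubic functional equation for T
  have hcubicT : ∀ x y : A, T ((2:ℝ)•x + y) + T ((2:ℝ)•x - y)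
      = (2:ℝ)•T (x+y) + (2:ℝ)•T (x-y) + (12:ℝ)•T x := by
    intro x y
    have hE : Tendsto (fun n => (g n ((2:ℝ)•x + y) + g n ((2:ℝ)•x - y))
        - ((2:ℝ)•g n (x+y) + (2:ℝ)•g n (x-y) + (12:ℝ)•g n x)) atTop
        (𝓝 ((T ((2:ℝ)•x + y) + T ((2:ℝ)•x - y))
          - ((2:ℝ)•T (x+y) + (2:ℝ)•T (x-y) + (12:ℝ)•T x))) :=
      ((hTtend _).add (hTtend _)).sub
        ((((hTtend _).const_smul (2:ℝ)).add ((hTtend _).const_smul (2:ℝ))).add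
          ((hTtend _).const_smul (12:ℝ)))
    have hr : Tendsto (fun n : ℕ => (8:ℝ)^n * φ₂ (((1:ℝ)/2^n)•x) (((1:ℝ)/2^n)•y))
        atTop (𝓝 0) := by
      refine (Filter.tendsto_add_atTop_iff_nat 1).mp ?_
      exact (hΨ x y).tendsto_atTop_zero.congr fun i => by rw [hpow3 (i+1)]
    have hnorm0 : Tendsto (fun n => ‖(g n ((2:ℝ)•x + y) + g n ((2:ℝ)•x - y))
        - ((2:ℝ)•g n (x+y) + (2:ℝ)•g n (x-y) + (12:ℝ)•g n x)‖) atTop (𝓝 0) :=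
      squeeze_zero (fun n => norm_nonneg _) (fun n => hg_cubic n x y) hr
    have h0 : ‖(T ((2:ℝ)•x + y) + T ((2:ℝ)•x - y))
        - ((2:ℝ)•T (x+y) + (2:ℝ)•T (x-y) + (12:ℝ)•T x)‖ = 0 :=
      tendsto_nhds_unique hE.norm hnorm0
    exact sub_eq_zero.mp (norm_eq_zero.mp h0)
  -- multiplicativity of T
  have hmul : ∀ x y : A, T (x * y) = T x * T y := by
    intro x y
    have h2n : Tendsto (fun n : ℕ => 2 * n) atTop atTop :=
      Filter.tendsto_atTop_mono (fun n => by simp only [id_eq]; omega) tendsto_id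
    have hA : Tendsto (fun n => g (2*n) (x*y)) atTop (𝓝 (T (x*y))) := (hTtend (x*y)).comp h2n
    have hB : Tendsto (fun n => g n x * g n y) atTop (𝓝 (T x * T y)) :=
      (hTtend x).mul (hTtend y)
    have hE : Tendsto (fun n => g (2*n) (x*y) - g n x * g n y) atTop
        (𝓝 (T (x*y) - T x * T y)) := hA.sub hB
    have hbd : ∀ n : ℕ, ‖g (2*n) (x*y) - g n x * g n y‖
        ≤ (2:ℝ)^(6*n) * φ₁ (((1:ℝ)/2^n)•x) (((1:ℝ)/2^n)•y) := by
      intro n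
      have h := h1 (((1:ℝ)/2^n)•x) (((1:ℝ)/2^n)•y)
      have e1 : (((1:ℝ)/2^n)•x) * (((1:ℝ)/2^n)•y) = ((1:ℝ)/2^(2*n)) • (x*y) := by
        rw [smul_mul_smul_comm]
        congr 1
        rw [div_mul_div_comm, one_mul, ← pow_add, two_mul]
      have e8 : (8:ℝ)^(2*n) = 8^n * 8^n := by rw [two_mul, pow_add]
      have e : g (2*n) (x*y) - g n x * g n y
          = ((8:ℝ)^n * 8^n) • (f ((((1:ℝ)/2^n)•x) * (((1:ℝ)/2^n)•y))
              - f (((1:ℝ)/2^n)•x) * f (((1:ℝ)/2^n)•y)) := by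
        simp only [hgdef, smul_mul_smul_comm, e1, e8, smul_sub]
      rw [e, norm_smul]
      have hn : ‖(8:ℝ)^n * 8^n‖ = (2:ℝ)^(6*n) := by
        rw [Real.norm_eq_abs, abs_of_nonneg (by positivity)]
        rw [show 6*n = 3*n + 3*n by ring, pow_add, hpow3]
      rw [hn]
      exact mul_le_mul_of_nonneg_left h (by positivity)
    have hnorm0 : Tendsto (fun n => ‖g (2*n) (x*y) - g n x * g n y‖) atTop (𝓝 0) :=
      squeeze_zero (fun n => norm_nonneg _) hbd (hlim x y)
    have h0 : ‖T (x*y) - T x * T y‖ = 0 := tendsto_nhds_unique hE.norm hnorm0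
    exact sub_eq_zero.mp (norm_eq_zero.mp h0)
  refine ⟨T, ⟨hmul, hcubicT, hbound⟩, ?_⟩
  rintro T' ⟨hT'mul, hT'cubic, hT'bound⟩
  -- doubling property for any solution of the cubic equation
  have hdouble : ∀ (S : A → A),
      (∀ x y : A, S ((2:ℝ)•x + y) + S ((2:ℝ)•x - y)
        = (2:ℝ)•S (x+y) + (2:ℝ)•S (x-y) + (12:ℝ)•S x) →
      ∀ z : A, S ((2:ℝ)•z) = (8:ℝ)•S z := by
    intro S hS z
    have h := hS z 0
    simp only [add_zero, sub_zero] at h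
    have h2' : (2:ℝ) • S ((2:ℝ)•z) = (2:ℝ) • ((8:ℝ)•S z) := by
      rw [two_smul, h]; module
    exact smul_right_injective A two_ne_zero h2'
  have hiter : ∀ (S : A → A), (∀ z : A, S ((2:ℝ)•z) = (8:ℝ)•S z) →
      ∀ (n : ℕ) (z : A), S z = (8:ℝ)^n • S (((1:ℝ)/2^n)•z) := by
    intro S hS n
    induction n with
    | zero => intro z; simp
    | succ n ih =>
      intro z
      rw [ih z, harg n z, hS, smul_smul, ← pow_succ]
  funext x
  have hTT' : ∀ n : ℕ, ‖T' x - T x‖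
      ≤ (1/8) * ((8:ℝ)^n * ∑' i : ℕ, (2:ℝ) ^ (3 * (i + 1))
          * φ₂ (((1:ℝ) / 2 ^ (i + 1)) • (((1:ℝ)/2^n)•x)) 0) := by
    intro n
    have e : T' x - T x = (8:ℝ)^n • (T' (((1:ℝ)/2^n)•x) - T (((1:ℝ)/2^n)•x)) := by
      rw [hiter T' (hdouble T' hT'cubic) n x, hiter T (hdouble T hcubicT) n x, smul_sub]
    rw [e, norm_smul, h8n]
    have ht : ‖T' (((1:ℝ)/2^n)•x) - T (((1:ℝ)/2^n)•x)‖
        ≤ ‖T' (((1:ℝ)/2^n)•x) - f (((1:ℝ)/2^n)•x)‖ + ‖T (((1:ℝ)/2^n)•x) - f (((1:ℝ)/2^n)•x)‖ := by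
      calc ‖T' (((1:ℝ)/2^n)•x) - T (((1:ℝ)/2^n)•x)‖
          = ‖(T' (((1:ℝ)/2^n)•x) - f (((1:ℝ)/2^n)•x)) - (T (((1:ℝ)/2^n)•x) - f (((1:ℝ)/2^n)•x))‖ := by
            congr 1; abel
        _ ≤ _ := norm_sub_le _ _
    have h1' := hT'bound (((1:ℝ)/2^n)•x)
    have h2' := hbound (((1:ℝ)/2^n)•x)
    have h8pos : (0:ℝ) < 8^n := by positivity
    nlinarith [mul_le_mul_of_nonneg_left (ht.trans (add_le_add h1' h2')) (le_of_lt h8pos)]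
  have htail : Tendsto (fun n : ℕ => (8:ℝ)^n * ∑' i : ℕ, (2:ℝ) ^ (3 * (i + 1))
      * φ₂ (((1:ℝ) / 2 ^ (i + 1)) • (((1:ℝ)/2^n)•x)) 0) atTop (𝓝 0) := by
    set a : ℕ → ℝ := fun i => (2:ℝ) ^ (3 * (i + 1)) * φ₂ (((1:ℝ) / 2 ^ (i + 1)) • x) 0 with ha
    have key : ∀ n : ℕ, (8:ℝ)^n * ∑' i : ℕ, (2:ℝ) ^ (3 * (i + 1))
        * φ₂ (((1:ℝ) / 2 ^ (i + 1)) • (((1:ℝ)/2^n)•x)) 0 = ∑' i : ℕ, a (i + n) := by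
      intro n
      rw [← tsum_mul_left]
      congr 1
      funext i
      have e1 : ((1:ℝ)/2^(i+1)) • (((1:ℝ)/2^n)•x) = ((1:ℝ)/2^((i+n)+1)) • x := by
        rw [smul_smul]
        congr 1
        rw [div_mul_div_comm, one_mul, ← pow_add]
        congr 2
        omega
      rw [e1, ha]
      have e2 : (8:ℝ)^n * 2^(3*(i+1)) = 2^(3*((i+n)+1)) := by
        rw [show (8:ℝ) = 2^3 by norm_num, ← pow_mul, ← pow_add]
        congr 1
        ring
      rw [← mul_assoc, e2]
    refine (tendsto_sum_nat_add a).congr fun n => (key n).symm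
  have hle : ‖T' x - T x‖ ≤ 0 := by
    have := htail.const_mul (1/8)
    rw [mul_zero] at this
    exact ge_of_tendsto' this hTT'
  have h0 : ‖T' x - T x‖ = 0 := le_antisymm hle (norm_nonneg _)
  exact sub_eq_zero.mp (norm_eq_zero.mp h0)
end

section
/- Let A be a normed algebra, B a Banach algebra, and f: A → B satisfy ‖f(2x+y) + f(2x−y) − 2f(x+y) − 2f(x−y) − 12f(x)‖ ≤ φ₂(x,y) for all x, y ∈ A. Then for every x ∈ A and every n ∈ ℕ, ‖f(x) − 2^{3n} f(x/2ⁿ)‖ ≤ (1/16) · Σ_{i=1}^{n} 2^{3i} φ₂(x/2ⁱ, 0). -/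
theorem cubic_iteration_bound_divided
    {A B : Type*} [NormedRing A] [NormedAlgebra ℝ A]
    [NormedRing B] [NormedAlgebra ℝ B] [CompleteSpace B]
    (f : A → B) (φ₂ : A → A → ℝ) (hφ₂ : ∀ x y, 0 ≤ φ₂ x y)
    (h : ∀ x y : A, ‖f ((2:ℝ) • x + y) + f ((2:ℝ) • x - y)
        - (2:ℝ) • f (x + y) - (2:ℝ) • f (x - y) - (12:ℝ) • f x‖ ≤ φ₂ x y) :
    ∀ (x : A) (n : ℕ),
      ‖f x - (2:ℝ) ^ (3 * n) • f (((1:ℝ) / 2 ^ n) • x)‖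
        ≤ (1 / 16) * ∑ i ∈ Finset.range n,
            (2:ℝ) ^ (3 * (i + 1)) * φ₂ (((1:ℝ) / 2 ^ (i + 1)) • x) 0 := by
  have key : ∀ z : A, ‖f z - (8:ℝ) • f (((1:ℝ)/2) • z)‖ ≤ φ₂ (((1:ℝ)/2) • z) 0 / 2 := by
    intro z
    have h0 := h (((1:ℝ)/2) • z) 0
    have hz : (2:ℝ) • (((1:ℝ)/2) • z) = z := by
      rw [smul_smul]; norm_num
    rw [hz] at h0
    simp only [add_zero, sub_zero] at h0
    have heq : f z + f z - (2:ℝ) • f (((1:ℝ)/2) • z) - (2:ℝ) • f (((1:ℝ)/2) • z)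
        - (12:ℝ) • f (((1:ℝ)/2) • z)
        = (2:ℝ) • (f z - (8:ℝ) • f (((1:ℝ)/2) • z)) := by
      module
    rw [heq, norm_smul] at h0
    simp only [Real.norm_ofNat] at h0
    linarith
  intro x n
  induction n with
  | zero => simp
  | succ n ih =>
    have hu : ((1:ℝ)/2^(n+1)) • x = ((1:ℝ)/2) • (((1:ℝ)/2^n) • x) := by
      rw [smul_smul]; ring_nf
    have heq : f x - (2:ℝ) ^ (3 * (n+1)) • f (((1:ℝ)/2^(n+1)) • x)
        = (f x - (2:ℝ) ^ (3 * n) • f (((1:ℝ)/2^n) • x))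
          + (2:ℝ) ^ (3 * n) • (f (((1:ℝ)/2^n) • x)
              - (8:ℝ) • f (((1:ℝ)/2) • (((1:ℝ)/2^n) • x))) := by
      rw [hu]
      have : (2:ℝ) ^ (3 * (n+1)) = (2:ℝ) ^ (3*n) * 8 := by ring
      rw [this]
      module
    rw [heq]
    calc _ ≤ ‖f x - (2:ℝ) ^ (3 * n) • f (((1:ℝ)/2^n) • x)‖
            + ‖(2:ℝ) ^ (3 * n) • (f (((1:ℝ)/2^n) • x)
              - (8:ℝ) • f (((1:ℝ)/2) • (((1:ℝ)/2^n) • x)))‖ := norm_add_le _ _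
      _ ≤ (1 / 16) * ∑ i ∈ Finset.range n,
            (2:ℝ) ^ (3 * (i + 1)) * φ₂ (((1:ℝ) / 2 ^ (i + 1)) • x) 0
            + (2:ℝ)^(3*n) * (φ₂ (((1:ℝ)/2) • (((1:ℝ)/2^n) • x)) 0 / 2) := by
          gcongr
          rw [norm_smul]
          have : ‖(2:ℝ)^(3*n)‖ = (2:ℝ)^(3*n) := by
            simp [abs_of_nonneg (by positivity : (0:ℝ) ≤ (2:ℝ)^(3*n))]
          rw [this]
          exact mul_le_mul_of_nonneg_left (key _) (by positivity)
      _ ≤ _ := by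
          rw [Finset.sum_range_succ, ← hu]
          have : (2:ℝ) ^ (3 * (n + 1)) = (2:ℝ)^(3*n) * 8 := by ring
          rw [this]
          ring_nf
          linarith
end

section
/- Let A be a Banach algebra, p > 3, θ > 0, and φ: A × A → ℝ≥0 with lim_{n→∞} 2^{6n}φ(x/2ⁿ, y/2ⁿ) = 0 for all x, y ∈ A. If f: A → A satisfies ‖f(xy) − f(x)f(y)‖ ≤ φ(x,y) and ‖f(2x+y) + f(2x−y) − 2f(x+y) − 2f(x−y) − 12f(x)‖ ≤ θ‖y‖^p for all x, y ∈ A, then f is a cubic homomorphism. -/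
theorem cubic_superstability_divided
    {A : Type*} [NormedRing A] [NormedAlgebra ℝ A] [CompleteSpace A]
    (f : A → A) (φ : A → A → ℝ) (hφ : ∀ x y, 0 ≤ φ x y) (θ p : ℝ)
    (hθ : 0 < θ) (hp : 3 < p)
    (hlim : ∀ x y : A, Filter.Tendsto
      (fun n : ℕ => (2:ℝ) ^ (6 * n) * φ (((1:ℝ) / 2 ^ n) • x) (((1:ℝ) / 2 ^ n) • y))
      Filter.atTop (nhds 0))
    (h1 : ∀ x y : A, ‖f (x * y) - f x * f y‖ ≤ φ x y)
    (h2 : ∀ x y : A, ‖f ((2:ℝ) • x + y) + f ((2:ℝ) • x - y)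
        - (2:ℝ) • f (x + y) - (2:ℝ) • f (x - y) - (12:ℝ) • f x‖ ≤ θ * pp ‖y‖ p) :
    (∀ x y : A, f (x * y) = f x * f y) ∧
    (∀ x y : A, f ((2:ℝ) • x + y) + f ((2:ℝ) • x - y)
      = (2:ℝ) • f (x + y) + (2:ℝ) • f (x - y) + (12:ℝ) • f x) := by
  have hpp0 : pp ‖(0:A)‖ p = 0 := by simp [pp]
  -- Step 1: f (2 • x) = 8 • f x
  have hdouble : ∀ x : A, f ((2:ℝ) • x) = (8:ℝ) • f x := by
    intro x
    have h := h2 x 0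
    rw [hpp0, mul_zero] at h
    simp only [add_zero, sub_zero] at h
    have h0 := norm_le_zero_iff.mp h
    have key : (2:ℝ) • (f ((2:ℝ) • x) - (8:ℝ) • f x) = 0 := by
      rw [← h0]; module
    rcases smul_eq_zero.mp key with h' | h'
    · norm_num at h'
    · exact sub_eq_zero.mp h'
  -- Step 2: f ((1/2^n) • x) = (1/8^n) • f x
  have hhalf : ∀ (n : ℕ) (x : A), f (((1:ℝ)/2^n) • x) = ((1:ℝ)/8^n) • f x := by
    intro n
    induction n with
    | zero => intro x; simp
    | succ n ih =>
      intro x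
      have e : ((1:ℝ)/2^n) • x = (2:ℝ) • (((1:ℝ)/2^(n+1)) • x) := by
        rw [smul_smul]; congr 1; rw [pow_succ]; field_simp
      have hd := hdouble (((1:ℝ)/2^(n+1)) • x)
      rw [← e, ih] at hd
      have step : f (((1:ℝ)/2^(n+1)) • x) = ((8:ℝ)⁻¹ * ((1:ℝ)/8^n)) • f x := by
        rw [← smul_smul, hd, smul_smul]
        norm_num
      rw [step]
      congr 1
      rw [pow_succ]
      ring
  constructor
  · -- multiplicativity
    intro x y
    have key : ∀ n : ℕ, ‖f (x*y) - f x * f y‖ ≤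
        (2:ℝ) ^ (6*n) * φ (((1:ℝ)/2^n) • x) (((1:ℝ)/2^n) • y) := by
      intro n
      have h := h1 (((1:ℝ)/2^n) • x) (((1:ℝ)/2^n) • y)
      have e1 : (((1:ℝ)/2^n) • x) * (((1:ℝ)/2^n) • y) = ((1:ℝ)/2^(2*n)) • (x*y) := by
        rw [smul_mul_smul_comm]
        congr 1
        rw [two_mul, pow_add]
        field_simp
      have e2 : f (((1:ℝ)/2^n) • x) * f (((1:ℝ)/2^n) • y)
          = ((1:ℝ)/8^(2*n)) • (f x * f y) := by
        rw [hhalf n x, hhalf n y, smul_mul_smul_comm]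
        congr 1
        rw [two_mul, pow_add]
        field_simp
      rw [e1, hhalf (2*n) (x*y), e2, ← smul_sub, norm_smul] at h
      have h8 : ((8:ℝ)^(2*n))⁻¹ * ‖f (x*y) - f x * f y‖ ≤ φ (((1:ℝ)/2^n) • x) (((1:ℝ)/2^n) • y) := by
        have : ‖(1:ℝ)/8^(2*n)‖ = ((8:ℝ)^(2*n))⁻¹ := by
          rw [Real.norm_eq_abs, abs_of_pos (by positivity)]
          field_simp
        rwa [this] at h
      have h64 : ((8:ℝ)^(2*n)) = (2:ℝ)^(6*n) := by
        rw [show (8:ℝ) = 2^3 by norm_num, ← pow_mul]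
        ring_nf
      have hpos : (0:ℝ) < (8:ℝ)^(2*n) := by positivity
      calc ‖f (x*y) - f x * f y‖
          = (8:ℝ)^(2*n) * (((8:ℝ)^(2*n))⁻¹ * ‖f (x*y) - f x * f y‖) := by
            field_simp
        _ ≤ (8:ℝ)^(2*n) * φ (((1:ℝ)/2^n) • x) (((1:ℝ)/2^n) • y) := by
            exact mul_le_mul_of_nonneg_left h8 (le_of_lt hpos)
        _ = (2:ℝ)^(6*n) * φ (((1:ℝ)/2^n) • x) (((1:ℝ)/2^n) • y) := by rw [h64]
    have hle : ‖f (x*y) - f x * f y‖ ≤ 0 :=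
      le_of_tendsto_of_tendsto' tendsto_const_nhds (hlim x y) key
    exact sub_eq_zero.mp (norm_le_zero_iff.mp hle)
  · -- cubic equation
    intro x y
    set E := f ((2:ℝ) • x + y) + f ((2:ℝ) • x - y) - (2:ℝ) • f (x + y)
        - (2:ℝ) • f (x - y) - (12:ℝ) • f x with hE
    suffices hE0 : E = 0 by
      have : (f ((2:ℝ) • x + y) + f ((2:ℝ) • x - y))
          - ((2:ℝ) • f (x + y) + (2:ℝ) • f (x - y) + (12:ℝ) • f x) = 0 := by
        rw [← hE0, hE]; abel
      exact sub_eq_zero.mp this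
    by_cases hy : ‖y‖ = 0
    · have h := h2 x y
      have : pp ‖y‖ p = 0 := by rw [hy]; simp [pp]
      rw [this, mul_zero] at h
      exact norm_le_zero_iff.mp h
    · have hy' : 0 < ‖y‖ := lt_of_le_of_ne (norm_nonneg y) (Ne.symm hy)
      set c : ℝ := 8 * ((1:ℝ)/2) ^ p with hc
      have hc0 : 0 ≤ c := by
        have : (0:ℝ) < ((1:ℝ)/2) ^ p := Real.rpow_pos_of_pos (by norm_num) p
        positivity
      have hc1 : c < 1 := by
        have h3 : ((1:ℝ)/2) ^ p < ((1:ℝ)/2) ^ (3:ℝ) :=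
          Real.rpow_lt_rpow_of_exponent_gt (by norm_num) (by norm_num) hp
        have h38 : ((1:ℝ)/2) ^ (3:ℝ) = 1/8 := by
          rw [show (3:ℝ) = ((3:ℕ):ℝ) by norm_num, Real.rpow_natCast]
          norm_num
        rw [hc]
        nlinarith [h3, h38]
      have key : ∀ n : ℕ, ‖E‖ ≤ (θ * ‖y‖ ^ p) * c ^ n := by
        intro n
        have h := h2 (((1:ℝ)/2^n) • x) (((1:ℝ)/2^n) • y)
        have ea : (2:ℝ) • (((1:ℝ)/2^n) • x) + ((1:ℝ)/2^n) • y
            = ((1:ℝ)/2^n) • ((2:ℝ) • x + y) := by module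
        have eb : (2:ℝ) • (((1:ℝ)/2^n) • x) - ((1:ℝ)/2^n) • y
            = ((1:ℝ)/2^n) • ((2:ℝ) • x - y) := by module
        have ec : ((1:ℝ)/2^n) • x + ((1:ℝ)/2^n) • y = ((1:ℝ)/2^n) • (x + y) := by module
        have ed : ((1:ℝ)/2^n) • x - ((1:ℝ)/2^n) • y = ((1:ℝ)/2^n) • (x - y) := by module
        rw [ea, eb, ec, ed, hhalf n ((2:ℝ) • x + y), hhalf n ((2:ℝ) • x - y),
          hhalf n (x+y), hhalf n (x-y), hhalf n x] at h
        have elhs : ((1:ℝ)/8^n) • f ((2:ℝ) • x + y) + ((1:ℝ)/8^n) • f ((2:ℝ) • x - y)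
            - (2:ℝ) • (((1:ℝ)/8^n) • f (x+y)) - (2:ℝ) • (((1:ℝ)/8^n) • f (x-y))
            - (12:ℝ) • (((1:ℝ)/8^n) • f x) = ((1:ℝ)/8^n) • E := by
          rw [hE]; module
        rw [elhs, norm_smul] at h
        have enrm : ‖(1:ℝ)/8^n‖ = ((8:ℝ)^n)⁻¹ := by
          rw [Real.norm_eq_abs, abs_of_pos (by positivity)]; field_simp
        rw [enrm] at h
        -- compute pp term
        have eyn : ‖((1:ℝ)/2^n) • y‖ = ((1:ℝ)/2^n) * ‖y‖ := by
          rw [norm_smul, Real.norm_eq_abs, abs_of_pos (by positivity)]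
        have hyne : ((1:ℝ)/2^n) * ‖y‖ ≠ 0 := by positivity
        have eppv : pp ‖((1:ℝ)/2^n) • y‖ p = (((1:ℝ)/2)^p)^n * ‖y‖ ^ p := by
          rw [eyn]
          simp only [pp, if_neg hyne]
          rw [Real.mul_rpow (by positivity) (norm_nonneg y)]
          congr 1
          rw [show ((1:ℝ)/2^n) = ((1:ℝ)/2)^n by rw [div_pow]; norm_num,
            ← Real.rpow_natCast ((1:ℝ)/2) n, ← Real.rpow_mul (by norm_num),
            mul_comm, Real.rpow_mul (by norm_num), Real.rpow_natCast]
        rw [eppv] at h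
        have h8pos : (0:ℝ) < (8:ℝ)^n := by positivity
        calc ‖E‖ = (8:ℝ)^n * (((8:ℝ)^n)⁻¹ * ‖E‖) := by field_simp
          _ ≤ (8:ℝ)^n * (θ * ((((1:ℝ)/2)^p)^n * ‖y‖ ^ p)) :=
              mul_le_mul_of_nonneg_left h (le_of_lt h8pos)
          _ = (θ * ‖y‖ ^ p) * c ^ n := by
              rw [hc, mul_pow]; ring
      have hlimc : Filter.Tendsto (fun n : ℕ => (θ * ‖y‖ ^ p) * c ^ n)
          Filter.atTop (nhds 0) := by
        have := (tendsto_pow_atTop_nhds_zero_of_lt_one hc0 hc1).const_mul (θ * ‖y‖ ^ p)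
        simpa using this
      have hle : ‖E‖ ≤ 0 := le_of_tendsto_of_tendsto' tendsto_const_nhds hlimc key
      exact norm_le_zero_iff.mp hle
end

section
/- Let A be a Banach algebra and suppose T, T′: A → A both satisfy the cubic functional equation T(2x+y)+T(2x−y)=2T(x+y)+2T(x−y)+12T(x), and suppose there is a map f: A → A and a function Ψ: A → ℝ≥0 with Ψ(x) = Σ_{i=0}^∞ φ₂(2ⁱx,0)/2^{3i} (convergent) such that ‖T(x) − f(x)‖ ≤ (1/16)Ψ(x) and ‖T′(x) − f(x)‖ ≤ (1/16)Ψ(x) for all x. Then T = T′. -/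
/-!
Putting `y = 0` in the cubic equation gives `T (2 • x) = 8 • T x`, hence `T (2ⁿ • x) = 8ⁿ • T x`.
Two cubic maps within `Ψ / 16` of the same `f` are therefore within `Ψ (2ⁿ • x) / 8ⁿ⁺¹` of each
other at `x`, and `Ψ (2ⁿ • x) / 8ⁿ` is the `n`-th tail of the series defining `Ψ x`, which
tends to `0`.
-/

def IsCubic {E F : Type*} [AddCommGroup E] [Module ℝ E] [AddCommGroup F] [Module ℝ F]
    (T : E → F) : Prop :=
  ∀ x y : E, T ((2:ℝ) • x + y) + T ((2:ℝ) • x - y)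
    = (2:ℝ) • T (x + y) + (2:ℝ) • T (x - y) + (12:ℝ) • T x

namespace IsCubic

variable {E F : Type*} [AddCommGroup E] [Module ℝ E]

theorem map_two_smul [AddCommGroup F] [Module ℝ F] {T : E → F} (hT : IsCubic T) (x : E) :
    T ((2:ℝ) • x) = (8:ℝ) • T x := by
  have h := hT x 0
  simp only [add_zero, sub_zero, ← two_smul ℝ (T ((2:ℝ) • x)), ← add_smul] at h
  refine smul_right_injective F (two_ne_zero (α := ℝ)) ?_
  simp only [h, smul_smul]
  norm_num

theorem map_two_pow_smul [AddCommGroup F] [Module ℝ F] {T : E → F} (hT : IsCubic T)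
    (n : ℕ) (x : E) : T ((2:ℝ) ^ n • x) = (8:ℝ) ^ n • T x := by
  induction n generalizing x with
  | zero => simp
  | succ n ih => rw [pow_succ, mul_smul, ih, hT.map_two_smul, smul_smul, pow_succ]

theorem norm_sub_le [NormedAddCommGroup F] [NormedSpace ℝ F] {T T' : E → F}
    (hT : IsCubic T) (hT' : IsCubic T') (f : E → F) (n : ℕ) (x : E) :
    ‖T x - T' x‖ ≤ (‖T ((2:ℝ) ^ n • x) - f ((2:ℝ) ^ n • x)‖
      + ‖T' ((2:ℝ) ^ n • x) - f ((2:ℝ) ^ n • x)‖) / 8 ^ n := by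
  rw [le_div_iff₀' (by positivity)]
  calc (8:ℝ) ^ n * ‖T x - T' x‖ = ‖T ((2:ℝ) ^ n • x) - T' ((2:ℝ) ^ n • x)‖ := by
        rw [hT.map_two_pow_smul, hT'.map_two_pow_smul, ← smul_sub, norm_smul,
          Real.norm_of_nonneg (by positivity)]
    _ ≤ _ := by
        rw [norm_sub_rev (T' _) (f _)]
        exact norm_sub_le_norm_sub_add_norm_sub _ _ _

end IsCubic

theorem tsum_two_pow_smul_two_pow_smul {E : Type*} [AddCommGroup E] [Module ℝ E]
    (φ : E → ℝ) (n : ℕ) (x : E) :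
    ∑' i : ℕ, φ ((2:ℝ) ^ i • (2:ℝ) ^ n • x) / 2 ^ (3 * i)
      = 8 ^ n * ∑' i : ℕ, φ ((2:ℝ) ^ (i + n) • x) / 2 ^ (3 * (i + n)) := by
  rw [← tsum_mul_left]
  congr 1 with i
  rw [smul_smul, ← pow_add, mul_add, pow_add (2:ℝ) (3 * i), pow_mul (2:ℝ) 3 n]
  field_simp
  norm_num

theorem eq_of_forall_norm_sub_le_mul_tsum_nat_add {E : Type*} [NormedAddCommGroup E]
    {a b : E} (g : ℕ → ℝ) (C : ℝ)
    (h : ∀ n, ‖a - b‖ ≤ C * ∑' i, g (i + n)) : a = b := by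
  have htail : Filter.Tendsto (fun n => C * ∑' i, g (i + n)) Filter.atTop (nhds 0) := by
    simpa using (tendsto_sum_nat_add g).const_mul C
  exact sub_eq_zero.mp (norm_le_zero_iff.mp (ge_of_tendsto' htail h))

theorem cubic_approximant_unique_general
    {A : Type*} [NormedRing A] [NormedAlgebra ℝ A]
    (T T' f : A → A) (φ₂ : A → A → ℝ)
    (hT : ∀ x y : A, T ((2:ℝ) • x + y) + T ((2:ℝ) • x - y)
      = (2:ℝ) • T (x + y) + (2:ℝ) • T (x - y) + (12:ℝ) • T x)
    (hT' : ∀ x y : A, T' ((2:ℝ) • x + y) + T' ((2:ℝ) • x - y)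
      = (2:ℝ) • T' (x + y) + (2:ℝ) • T' (x - y) + (12:ℝ) • T' x)
    (hbT : ∀ x : A, ‖T x - f x‖ ≤ (1 / 16) * ∑' i : ℕ, φ₂ ((2:ℝ) ^ i • x) 0 / 2 ^ (3 * i))
    (hbT' : ∀ x : A, ‖T' x - f x‖ ≤ (1 / 16) * ∑' i : ℕ, φ₂ ((2:ℝ) ^ i • x) 0 / 2 ^ (3 * i)) :
    T = T' := by
  funext x
  refine eq_of_forall_norm_sub_le_mul_tsum_nat_add
    (fun i => φ₂ ((2:ℝ) ^ i • x) 0 / 2 ^ (3 * i)) (1 / 8) fun n => ?_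
  have hΨ := tsum_two_pow_smul_two_pow_smul (φ₂ · 0) n x
  set tail := ∑' i : ℕ, φ₂ ((2:ℝ) ^ (i + n) • x) 0 / 2 ^ (3 * (i + n))
  calc ‖T x - T' x‖
      ≤ (‖T ((2:ℝ) ^ n • x) - f ((2:ℝ) ^ n • x)‖
          + ‖T' ((2:ℝ) ^ n • x) - f ((2:ℝ) ^ n • x)‖) / 8 ^ n :=
        IsCubic.norm_sub_le hT hT' f n x
    _ ≤ (1 / 16 * (8 ^ n * tail) + 1 / 16 * (8 ^ n * tail)) / 8 ^ n := by
        rw [← hΨ]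
        gcongr
        exacts [hbT _, hbT' _]
    _ = 1 / 8 * tail := by
        field_simp
        ring

theorem cubic_approximant_unique
    {A : Type*} [NormedRing A] [NormedAlgebra ℝ A] [CompleteSpace A]
    (T T' f : A → A) (φ₂ : A → A → ℝ) (hφ₂ : ∀ x y, 0 ≤ φ₂ x y)
    (hsum : ∀ x : A, Summable (fun i : ℕ => φ₂ ((2:ℝ) ^ i • x) 0 / 2 ^ (3 * i)))
    (hT : ∀ x y : A, T ((2:ℝ) • x + y) + T ((2:ℝ) • x - y)
      = (2:ℝ) • T (x + y) + (2:ℝ) • T (x - y) + (12:ℝ) • T x)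
    (hT' : ∀ x y : A, T' ((2:ℝ) • x + y) + T' ((2:ℝ) • x - y)
      = (2:ℝ) • T' (x + y) + (2:ℝ) • T' (x - y) + (12:ℝ) • T' x)
    (hbT : ∀ x : A, ‖T x - f x‖ ≤ (1 / 16) * ∑' i : ℕ, φ₂ ((2:ℝ) ^ i • x) 0 / 2 ^ (3 * i))
    (hbT' : ∀ x : A, ‖T' x - f x‖ ≤ (1 / 16) * ∑' i : ℕ, φ₂ ((2:ℝ) ^ i • x) 0 / 2 ^ (3 * i)) :
    T = T' :=
  cubic_approximant_unique_general T T' f φ₂ hT hT' hbT hbT'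
end
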